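/- arXiv:2210.01121 — 6 statements merged into one kernel-verified Lean document; each statement's English description precedes it below -/
import Mathlib

section
/- Suppose X is geometrically distributed, i.e. there exists θ ∈ (0,1) with P(X = k) = (1-θ)θ^k for all k ∈ ℕ. Then the linear forms L₁ = X̃_{1-p} + ε(p)·Y and L₂ = X̃_p + (1-ε(p))·Y are stochastically independent. -/
/-!
Split the event `{L₁ = m, L₂ = n}` according to the value of `ε(p)`: for `ε(p) = 1` it is the
disjoint union over `i ≤ m` of `{X = n + i, Y = m - i, X̃_{1-p} = i}`, for `ε(p) = 0` the disjoint
union over `i ≤ n` of `{X = m + i, Y = n - i, X̃_{1-p} = m}`. By independence each piece has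
probability (geometric) × (geometric) × (Bernoulli) × (binomial), and for geometric `X`, `Y` the
total is `(1 - θ)² θ^(m+n)` times
`p^(n+1) ∑_{i ≤ m} C(n+i, i) (1-p)^i + (1-p)^(m+1) ∑_{i ≤ n} C(m+i, i) p^i`,
which is `1` (problem of points). Hence `(L₁, L₂)` has the law of two independent copies of `X`.
-/

open MeasureTheory ProbabilityTheory Finset

section ProblemOfPoints
variable {p q : ℝ}

lemma mul_sum_choose_succ_mul_pow (hpq : p + q = 1) (m n : ℕ) :
    q * ∑ i ∈ range (n + 1), ((m + 1 + i).choose i : ℝ) * p ^ i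
      = ∑ i ∈ range (n + 1), ((m + i).choose i : ℝ) * p ^ i
        - ((m + n + 1).choose n : ℝ) * p ^ (n + 1) := by
  induction n with
  | zero =>
    simp only [zero_add, range_one, sum_singleton, add_zero, Nat.choose_zero_right, Nat.cast_one,
      pow_zero, mul_one, pow_one, one_mul]
    linarith
  | succ n ih =>
    have pascal : (m + 1 + (n + 1)).choose (n + 1)
        = (m + n + 1).choose n + (m + (n + 1)).choose (n + 1) := by
      rw [show m + 1 + (n + 1) = m + n + 1 + 1 by omega, Nat.choose_succ_succ,
        show m + (n + 1) = m + n + 1 by omega]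
    rw [sum_range_succ, mul_add, ih, sum_range_succ _ (n + 1), pascal,
      show m + (n + 1) + 1 = m + 1 + (n + 1) by omega, pascal]
    push_cast
    linear_combination (((m + n + 1).choose n + (m + (n + 1)).choose (n + 1) : ℝ) * p ^ (n + 1))
      * hpq

/-- The problem of points: in Bernoulli trials with success probability `p` and failure
probability `q`, either `n + 1` successes precede `m + 1` failures or the other way round. -/
theorem pow_mul_sum_choose_add_pow_mul_sum_choose (hpq : p + q = 1) (m n : ℕ) :
    p ^ (n + 1) * ∑ i ∈ range (m + 1), ((n + i).choose i : ℝ) * q ^ i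
      + q ^ (m + 1) * ∑ i ∈ range (n + 1), ((m + i).choose i : ℝ) * p ^ i = 1 := by
  induction m with
  | zero =>
    simp only [zero_add, Nat.choose_self, Nat.choose_zero_right, Nat.cast_one, one_mul,
      sum_range_one, pow_zero, mul_one, pow_one]
    rw [show q = 1 - p by linarith, mul_neg_geom_sum]
    ring
  | succ m ih =>
    rw [sum_range_succ, pow_succ q (m + 1), mul_assoc, mul_sum_choose_succ_mul_pow hpq,
      show n + (m + 1) = m + 1 + n by omega, Nat.choose_symm_add,
      show m + 1 + n = m + n + 1 by omega]
    linear_combination ih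

/-- The two sums are the contributions of `ε(p) = 1` and of `ε(p) = 0` to `P(L₁ = m, L₂ = n)`
for geometric `X`, `Y`. -/
lemma sum_geometric_mul_thinning_eq (hpq : p + q = 1) (θ : ℝ) (m n : ℕ) :
    ∑ i ∈ range (m + 1), (1 - θ) * θ ^ (n + i) * ((1 - θ) * θ ^ (m - i)) * p
        * ((n + i).choose i * q ^ i * p ^ (n + i - i))
      + ∑ i ∈ range (n + 1), (1 - θ) * θ ^ (m + i) * ((1 - θ) * θ ^ (n - i)) * q
        * ((m + i).choose m * q ^ m * p ^ (m + i - m))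
      = (1 - θ) * θ ^ m * ((1 - θ) * θ ^ n) := by
  have hθ {a b : ℕ} (hab : a + b = m + n) : θ ^ a * θ ^ b = θ ^ (m + n) := by rw [← pow_add, hab]
  have hfirst : ∑ i ∈ range (m + 1), (1 - θ) * θ ^ (n + i) * ((1 - θ) * θ ^ (m - i)) * p
        * ((n + i).choose i * q ^ i * p ^ (n + i - i))
      = (1 - θ) ^ 2 * θ ^ (m + n)
        * (p ^ (n + 1) * ∑ i ∈ range (m + 1), ((n + i).choose i : ℝ) * q ^ i) := by
    rw [mul_sum, mul_sum]
    refine sum_congr rfl fun i hi => ?_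
    rw [Nat.add_sub_cancel, ← hθ (a := n + i) (b := m - i) (by grind)]
    ring
  have hsecond : ∑ i ∈ range (n + 1), (1 - θ) * θ ^ (m + i) * ((1 - θ) * θ ^ (n - i)) * q
        * ((m + i).choose m * q ^ m * p ^ (m + i - m))
      = (1 - θ) ^ 2 * θ ^ (m + n)
        * (q ^ (m + 1) * ∑ i ∈ range (n + 1), ((m + i).choose i : ℝ) * p ^ i) := by
    rw [mul_sum, mul_sum]
    refine sum_congr rfl fun i hi => ?_
    rw [Nat.add_sub_cancel_left, Nat.choose_symm_add, ← hθ (a := m + i) (b := n - i) (by grind)]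
    ring
  rw [hfirst, hsecond, ← mul_add, pow_mul_sum_choose_add_pow_mul_sum_choose hpq, pow_add]
  ring

end ProblemOfPoints

namespace ProbabilityTheory
variable {Ω ι : Type*} [DecidableEq ι] {ε : ι → Ω → ℕ}

lemma setOf_sum_eq_iUnion_powersetCard (hε01 : ∀ j ω, ε j ω ≤ 1) (s : Finset ι) (a : ℕ) :
    {ω | ∑ j ∈ s, ε j ω = a}
      = ⋃ t ∈ s.powersetCard a, {ω | ∀ j ∈ s, ε j ω = if j ∈ t then 1 else 0} := by
  ext ω
  simp only [Set.mem_ofPred_eq, Set.mem_iUnion, mem_powersetCard, exists_prop]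
  constructor
  · rintro rfl
    refine ⟨s.filter (ε · ω = 1), ⟨filter_subset _ _, ?_⟩, fun j _ => ?_⟩
    · rw [card_filter]
      refine sum_congr rfl fun j _ => ?_
      have := hε01 j ω
      split_ifs <;> omega
    · have := hε01 j ω
      simp only [mem_filter]
      split_ifs <;> grind
  · rintro ⟨t, ⟨hts, rfl⟩, hω⟩
    rw [sum_congr rfl hω, sum_boole, filter_mem_eq_inter, inter_eq_right.mpr hts]
    simp

variable [MeasurableSpace Ω] {μ : Measure Ω}

lemma measure_eq_zero_eq_ofReal_one_sub [IsProbabilityMeasure μ] {f : Ω → ℕ} (hf : Measurable f)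
    (hf01 : ∀ ω, f ω ≤ 1) {q : ℝ} (hq : 0 ≤ q) (h1 : μ {ω | f ω = 1} = ENNReal.ofReal q) :
    μ {ω | f ω = 0} = ENNReal.ofReal (1 - q) := by
  have hcompl : {ω | f ω = 0} = {ω | f ω = 1}ᶜ := by
    ext ω
    have := hf01 ω
    simp only [Set.mem_ofPred_eq, Set.mem_compl_iff]
    omega
  rw [hcompl, prob_compl_eq_one_sub (s := {ω | f ω = 1}) (hf (measurableSet_singleton 1)), h1,
    ENNReal.ofReal_sub _ hq, ENNReal.ofReal_one]

lemma iIndepFun.measure_forall_eq_ite (hind : iIndepFun ε μ) {q : ℝ} (hq0 : 0 ≤ q) (hq1 : q ≤ 1)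
    (h1 : ∀ j, μ {ω | ε j ω = 1} = ENNReal.ofReal q)
    (h0 : ∀ j, μ {ω | ε j ω = 0} = ENNReal.ofReal (1 - q)) {s t : Finset ι} (hts : t ⊆ s) :
    μ {ω | ∀ j ∈ s, ε j ω = if j ∈ t then 1 else 0}
      = ENNReal.ofReal (q ^ #t * (1 - q) ^ (#s - #t)) := by
  have hinter : {ω | ∀ j ∈ s, ε j ω = if j ∈ t then 1 else 0}
      = ⋂ j ∈ s, ε j ⁻¹' {if j ∈ t then 1 else 0} := by
    ext ω; simp
  have hfactor : ∀ j, μ (ε j ⁻¹' {if j ∈ t then 1 else 0})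
      = if j ∈ t then ENNReal.ofReal q else ENNReal.ofReal (1 - q) := fun j => by
    split_ifs
    exacts [h1 j, h0 j]
  rw [hinter, hind.measure_inter_preimage_eq_mul s fun _ _ => .of_discrete,
    prod_congr rfl fun j _ => hfactor j, prod_ite, prod_const, prod_const, filter_mem_eq_inter,
    inter_eq_right.mpr hts, filter_notMem_eq_sdiff, card_sdiff_of_subset hts,
    ENNReal.ofReal_mul (by positivity), ENNReal.ofReal_pow hq0, ENNReal.ofReal_pow (by linarith)]

theorem iIndepFun.measure_sum_eq_binomial [IsProbabilityMeasure μ] (hind : iIndepFun ε μ)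
    (hεm : ∀ j, Measurable (ε j)) (hε01 : ∀ j ω, ε j ω ≤ 1) {q : ℝ} (hq0 : 0 ≤ q) (hq1 : q ≤ 1)
    (h1 : ∀ j, μ {ω | ε j ω = 1} = ENNReal.ofReal q) (s : Finset ι) (a : ℕ) :
    μ {ω | ∑ j ∈ s, ε j ω = a}
      = ENNReal.ofReal ((#s).choose a * q ^ a * (1 - q) ^ (#s - a)) := by
  have h0 j := measure_eq_zero_eq_ofReal_one_sub (hεm j) (hε01 j) hq0 (h1 j)
  have hdisj : (s.powersetCard a : Set (Finset ι)).PairwiseDisjoint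
      fun t => {ω | ∀ j ∈ s, ε j ω = if j ∈ t then 1 else 0} := by
    intro t ht t' ht' hne
    refine Set.disjoint_left.mpr fun ω hω hω' => hne ?_
    simp only [mem_coe, mem_powersetCard] at ht ht'
    ext j
    by_cases hj : j ∈ s
    · have := (hω j hj).symm.trans (hω' j hj)
      split_ifs at this <;> simp_all
    · exact iff_of_false (fun h => hj (ht.1 h)) fun h => hj (ht'.1 h)
  have hmeas (t : Finset ι) : MeasurableSet {ω | ∀ j ∈ s, ε j ω = if j ∈ t then 1 else 0} := by
    simp only [Set.ofPred_forall]
    exact .biInter s.countable_toSet fun j _ => hεm j (.singleton _)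
  rw [setOf_sum_eq_iUnion_powersetCard hε01, measure_biUnion_finset hdisj fun t _ => hmeas t,
    sum_congr rfl fun t ht => ?_, sum_const, card_powersetCard, nsmul_eq_mul, mul_assoc,
    ENNReal.ofReal_mul (by positivity), ENNReal.ofReal_natCast]
  rw [mem_powersetCard] at ht
  rw [hind.measure_forall_eq_ite hq0 hq1 h1 h0 ht.1, ht.2]

end ProbabilityTheory

lemma indepFun_of_measure_inter_preimage_singleton {Ω α β : Type*} [MeasurableSpace Ω]
    {μ : Measure Ω} [IsFiniteMeasure μ] [MeasurableSpace α] [MeasurableSpace β] [Countable α]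
    [Countable β] [MeasurableSingletonClass α] [MeasurableSingletonClass β] {f : Ω → α} {g : Ω → β}
    (hf : Measurable f) (hg : Measurable g) (ν : Measure α) (ν' : Measure β)
    [IsProbabilityMeasure ν] [IsProbabilityMeasure ν']
    (h : ∀ a b, μ (f ⁻¹' {a} ∩ g ⁻¹' {b}) = ν {a} * ν' {b}) : IndepFun f g μ := by
  have hjoint : μ.map (fun ω => (f ω, g ω)) = ν.prod ν' := Measure.ext_of_singleton fun ⟨a, b⟩ => by
    rw [Measure.map_apply (hf.prodMk hg) (.singleton _), ← Set.singleton_prod_singleton,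
      Set.mk_preimage_prod, Measure.prod_prod, h]
  have hf_law : μ.map f = ν := by
    rw [show f = Prod.fst ∘ fun ω => (f ω, g ω) from rfl, ← Measure.map_map measurable_fst
      (hf.prodMk hg), hjoint, Measure.map_fst_prod, measure_univ, one_smul]
  have hg_law : μ.map g = ν' := by
    rw [show g = Prod.snd ∘ fun ω => (f ω, g ω) from rfl, ← Measure.map_map measurable_snd
      (hf.prodMk hg), hjoint, Measure.map_snd_prod, measure_univ, one_smul]
  rw [indepFun_iff_map_prod_eq_prod_map_map hf.aemeasurable hg.aemeasurable, hjoint, hf_law,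
    hg_law]

lemma measurable_sum_range_of_measurable {Ω M : Type*} [MeasurableSpace Ω] [AddCommMonoid M]
    [MeasurableSpace M] [MeasurableAdd₂ M] {N : Ω → ℕ} {f : ℕ → Ω → M} (hN : Measurable N)
    (hf : ∀ j, Measurable (f j)) : Measurable fun ω => ∑ j ∈ range (N ω), f j ω :=
  (measurable_from_prod_countable_left (f := fun q : Ω × ℕ => ∑ j ∈ range q.2, f j q.1)
    fun k => Finset.measurable_sum (range k) fun j _ => hf j).comp (measurable_id.prodMk hN)

section Thinning

variable {Ω : Type*} {X Y εp : Ω → ℕ} {ε : ℕ → Ω → ℕ}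

/-- On this event `∑ j ∈ range k, ε j` is the thinned variable `X̃_{1-p}`. -/
def thinningEvent (X Y εp : Ω → ℕ) (ε : ℕ → Ω → ℕ) (k y b a : ℕ) : Set Ω :=
  {ω | X ω = k ∧ Y ω = y ∧ εp ω = b ∧ ∑ j ∈ range k, ε j ω = a}

lemma disjoint_thinningEvent {k y b a k' y' b' a' : ℕ} (h : k ≠ k' ∨ b ≠ b') :
    Disjoint (thinningEvent X Y εp ε k y b a) (thinningEvent X Y εp ε k' y' b' a') :=
  Set.disjoint_left.mpr fun ω hω hω' => by
    simp only [thinningEvent, Set.mem_ofPred_eq] at hω hω'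
    omega

lemma setOf_linearForms_eq_union (hεp01 : ∀ ω, εp ω ≤ 1) (hε01 : ∀ j ω, ε j ω ≤ 1) (m n : ℕ) :
    {ω | (∑ j ∈ range (X ω), ε j ω) + εp ω * Y ω = m
        ∧ (∑ j ∈ range (X ω), (1 - ε j ω)) + (1 - εp ω) * Y ω = n}
      = (⋃ i ∈ range (m + 1), thinningEvent X Y εp ε (n + i) (m - i) 1 i)
        ∪ ⋃ i ∈ range (n + 1), thinningEvent X Y εp ε (m + i) (n - i) 0 m := by
  ext ω
  have hcompl (k : ℕ) : ∑ j ∈ range k, (1 - ε j ω) = k - ∑ j ∈ range k, ε j ω := by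
    rw [sum_tsub_distrib _ fun j _ => hε01 j ω, sum_const, card_range, smul_eq_mul, mul_one]
  have hle (k : ℕ) : ∑ j ∈ range k, ε j ω ≤ k := by
    simpa using sum_le_card_nsmul (range k) (ε · ω) 1 fun j _ => hε01 j ω
  simp only [thinningEvent, Set.mem_union, Set.mem_iUnion, Set.mem_ofPred_eq, mem_range,
    exists_prop, hcompl]
  have hS := hle (X ω)
  rcases Nat.le_one_iff_eq_zero_or_eq_one.mp (hεp01 ω) with hb | hb <;> rw [hb] <;>
    simp only [zero_mul, one_mul, add_zero, Nat.sub_zero, Nat.sub_self, zero_ne_one, one_ne_zero,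
      false_and, and_false, exists_false, true_and, false_or, or_false]
  · constructor
    · rintro ⟨hm, hn⟩
      exact ⟨X ω - m, by omega, by omega, by omega, by rw [show m + (X ω - m) = X ω by omega, hm]⟩
    · rintro ⟨i, hi, hX, hY, hsum⟩
      rw [hX, hsum, hY]
      omega
  · constructor
    · rintro ⟨hm, hn⟩
      refine ⟨∑ j ∈ range (X ω), ε j ω, by omega, by omega, by omega, ?_⟩
      rw [show n + ∑ j ∈ range (X ω), ε j ω = X ω by omega]
    · rintro ⟨i, hi, hX, hY, hsum⟩
      rw [hX, hsum, hY]
      omega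

variable [MeasurableSpace Ω] {μ : Measure Ω}

lemma measurableSet_thinningEvent (hXm : Measurable X) (hYm : Measurable Y)
    (hεpm : Measurable εp) (hεm : ∀ j, Measurable (ε j)) (k y b a : ℕ) :
    MeasurableSet (thinningEvent X Y εp ε k y b a) :=
  (hXm (.singleton k)).inter <| (hYm (.singleton y)).inter <| (hεpm (.singleton b)).inter <|
    Finset.measurable_sum _ (fun j _ => hεm j) (.singleton a)

lemma measure_thinningEvent (hXm : Measurable X) (hYm : Measurable Y) (hεpm : Measurable εp)
    (hεm : ∀ j, Measurable (ε j))
    (hindep : iIndepFun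
      (fun i : ℕ => if i = 0 then X else if i = 1 then Y else if i = 2 then εp
        else ε (i - 3)) μ) (k y b a : ℕ) :
    μ (thinningEvent X Y εp ε k y b a)
      = μ {ω | X ω = k} * μ {ω | Y ω = y} * μ {ω | εp ω = b}
        * μ {ω | ∑ j ∈ range k, ε j ω = a} := by
  set F : ℕ → Ω → ℕ := fun i => if i = 0 then X else if i = 1 then Y else if i = 2 then εp
    else ε (i - 3) with hF
  have hFm : ∀ i, Measurable (F i) := fun i => by
    simp only [hF]; split_ifs <;> first | assumption | exact hεm _
  set mS := ⨆ i ∈ {i : ℕ | i < 3}, MeasurableSpace.comap (F i) inferInstance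
  set mT := ⨆ i ∈ {i : ℕ | 3 ≤ i}, MeasurableSpace.comap (F i) inferInstance
  have hST : Indep mS mT μ := indep_iSup_of_disjoint (fun i => (hFm i).comap_le) hindep
    (Set.disjoint_left.mpr fun i (hi : i < 3) (hi' : 3 ≤ i) => by omega)
  have hS : ∀ i < 3, Measurable[mS] (F i) := fun i hi =>
    Measurable.of_comap_le (le_iSup₂ (f := fun i (_ : i < 3) => MeasurableSpace.comap (F i) _) i hi)
  have hT : ∀ j, Measurable[mT] (ε j) := fun j => by
    simpa [hF] using Measurable.of_comap_le
      (le_iSup₂ (f := fun i (_ : 3 ≤ i) => MeasurableSpace.comap (F i) _) (j + 3) (by omega))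
  have hA : MeasurableSet[mS] {ω | X ω = k ∧ Y ω = y ∧ εp ω = b} :=
    (hS 0 (by norm_num) (.singleton k)).inter
      ((hS 1 (by norm_num) (.singleton y)).inter (hS 2 (by norm_num) (.singleton b)))
  have hB : MeasurableSet[mT] {ω | ∑ j ∈ range k, ε j ω = a} :=
    Finset.measurable_sum _ (fun j _ => hT j) (.singleton a)
  have hhead : μ {ω | X ω = k ∧ Y ω = y ∧ εp ω = b}
      = μ {ω | X ω = k} * μ {ω | Y ω = y} * μ {ω | εp ω = b} := by
    have := hindep.meas_biInter (S := {0, 1, 2})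
      (s := fun i => F i ⁻¹' {if i = 0 then k else if i = 1 then y else b})
      fun i _ => ⟨_, .singleton _, rfl⟩
    change μ (X ⁻¹' {k} ∩ (Y ⁻¹' {y} ∩ εp ⁻¹' {b}))
      = μ (X ⁻¹' {k}) * μ (Y ⁻¹' {y}) * μ (εp ⁻¹' {b})
    simpa [hF, mul_assoc] using this
  have hsplit : thinningEvent X Y εp ε k y b a
      = {ω | X ω = k ∧ Y ω = y ∧ εp ω = b} ∩ {ω | ∑ j ∈ range k, ε j ω = a} := by
    ext; simp [thinningEvent, and_assoc]
  rw [hsplit, (Indep_iff _ _ μ).1 hST _ _ hA hB, hhead]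

lemma measureReal_thinningEvent [IsProbabilityMeasure μ] {p : ℝ} (hp0 : 0 ≤ p) (hp1 : p ≤ 1)
    (hXm : Measurable X) (hYm : Measurable Y) (hεpm : Measurable εp)
    (hεm : ∀ j, Measurable (ε j)) (hε01 : ∀ j ω, ε j ω ≤ 1)
    (hεP : ∀ j, μ {ω | ε j ω = 1} = ENNReal.ofReal (1 - p))
    (hindep : iIndepFun
      (fun i : ℕ => if i = 0 then X else if i = 1 then Y else if i = 2 then εp
        else ε (i - 3)) μ) (k y b a : ℕ) :
    μ.real (thinningEvent X Y εp ε k y b a)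
      = μ.real {ω | X ω = k} * μ.real {ω | Y ω = y} * μ.real {ω | εp ω = b}
        * (k.choose a * (1 - p) ^ a * p ^ (k - a)) := by
  have hε : iIndepFun ε μ := by
    simpa [Function.comp_def] using hindep.precomp (add_left_injective 3)
  have hbinom := hε.measure_sum_eq_binomial hεm hε01 (by linarith) (by linarith) hεP (range k) a
  rw [card_range, sub_sub_cancel] at hbinom
  simp only [measureReal_def, measure_thinningEvent hXm hYm hεpm hεm hindep, ENNReal.toReal_mul,
    hbinom]
  rw [ENNReal.toReal_ofReal (by positivity)]

theorem measureReal_linearForms [IsProbabilityMeasure μ] {p θ : ℝ} (hp0 : 0 ≤ p) (hp1 : p ≤ 1)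
    (hXm : Measurable X) (hYm : Measurable Y) (hεpm : Measurable εp)
    (hεm : ∀ j, Measurable (ε j))
    (hεp01 : ∀ ω, εp ω ≤ 1) (hεpp : μ {ω | εp ω = 1} = ENNReal.ofReal p)
    (hε01 : ∀ j ω, ε j ω ≤ 1) (hεP : ∀ j, μ {ω | ε j ω = 1} = ENNReal.ofReal (1 - p))
    (hindep : iIndepFun
      (fun i : ℕ => if i = 0 then X else if i = 1 then Y else if i = 2 then εp
        else ε (i - 3)) μ)
    (hX : ∀ k, μ.real {ω | X ω = k} = (1 - θ) * θ ^ k)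
    (hY : ∀ k, μ.real {ω | Y ω = k} = (1 - θ) * θ ^ k) (m n : ℕ) :
    μ.real {ω | (∑ j ∈ range (X ω), ε j ω) + εp ω * Y ω = m
        ∧ (∑ j ∈ range (X ω), (1 - ε j ω)) + (1 - εp ω) * Y ω = n}
      = (1 - θ) * θ ^ m * ((1 - θ) * θ ^ n) := by
  have hεp1 : μ.real {ω | εp ω = 1} = p := by
    rw [measureReal_def, hεpp, ENNReal.toReal_ofReal hp0]
  have hεp0 : μ.real {ω | εp ω = 0} = 1 - p := by
    rw [measureReal_def, measure_eq_zero_eq_ofReal_one_sub hεpm hεp01 hp0 hεpp,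
      ENNReal.toReal_ofReal (by linarith)]
  have hmeas := measurableSet_thinningEvent hXm hYm hεpm hεm
  have hdisj (c d b : ℕ) (y a : ℕ → ℕ) : (range c : Set ℕ).PairwiseDisjoint
      fun i => thinningEvent X Y εp ε (d + i) (y i) b (a i) :=
    fun i _ i' _ hii' => disjoint_thinningEvent (Or.inl (by omega))
  rw [setOf_linearForms_eq_union hεp01 hε01,
    measureReal_union ?_ ((range _).measurableSet_biUnion fun i _ => hmeas _ _ _ _)
      (measure_ne_top _ _) (measure_ne_top _ _),
    measureReal_biUnion_finset (hdisj _ n 1 (m - ·) fun i => i) fun i _ => hmeas _ _ _ _,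
    measureReal_biUnion_finset (hdisj _ m 0 (n - ·) fun _ => m) fun i _ => hmeas _ _ _ _]
  · simp only [measureReal_thinningEvent hp0 hp1 hXm hYm hεpm hεm hε01 hεP hindep, hX, hY, hεp1,
      hεp0]
    exact sum_geometric_mul_thinning_eq (add_sub_cancel p 1) θ m n
  · exact Set.disjoint_iUnion₂_left.mpr fun i _ => Set.disjoint_iUnion₂_right.mpr
      fun i' _ => disjoint_thinningEvent (Or.inr one_ne_zero)

end Thinning

/-- If `X` is geometrically distributed, then the linear forms
`L₁ = X̃_{1-p} + ε(p)·Y` and `L₂ = X̃_p + (1-ε(p))·Y` are independent. -/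
theorem geometric_implies_indep_linear_forms
    {Ω : Type*} [MeasurableSpace Ω] (μ : Measure Ω) [IsProbabilityMeasure μ]
    (p : ℝ) (hp0 : 0 < p) (hp1 : p < 1)
    (X Y εp : Ω → ℕ) (ε : ℕ → Ω → ℕ)
    (hXm : Measurable X) (hYm : Measurable Y) (hεpm : Measurable εp)
    (hεm : ∀ j, Measurable (ε j))
    -- X and Y are identically distributed
    (hXY : IdentDistrib X Y μ μ)
    -- ε(p) is a Bernoulli random variable with parameter p
    (hεp01 : ∀ ω, εp ω ≤ 1)
    (hεpp : μ {ω | εp ω = 1} = ENNReal.ofReal p)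
    -- each ε_j is a Bernoulli random variable with parameter 1 - p
    (hε01 : ∀ j ω, ε j ω ≤ 1)
    (hεP : ∀ j, μ {ω | ε j ω = 1} = ENNReal.ofReal (1 - p))
    -- X, Y, ε(p) and the ε_j's are mutually independent
    (hindep : iIndepFun
      (fun i : ℕ => if i = 0 then X else if i = 1 then Y else if i = 2 then εp
        else ε (i - 3)) μ)
    -- X is geometrically distributed
    (hgeom : ∃ θ : ℝ, 0 < θ ∧ θ < 1 ∧
      ∀ k : ℕ, μ {ω | X ω = k} = ENNReal.ofReal ((1 - θ) * θ ^ k)) :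
    IndepFun (fun ω => (∑ j ∈ Finset.range (X ω), ε j ω) + εp ω * Y ω)
      (fun ω => (∑ j ∈ Finset.range (X ω), (1 - ε j ω)) + (1 - εp ω) * Y ω) μ := by
  obtain ⟨θ, hθ0, hθ1, hgeomX⟩ := hgeom
  have hX (k : ℕ) : μ.real {ω | X ω = k} = (1 - θ) * θ ^ k := by
    rw [measureReal_def, hgeomX, ENNReal.toReal_ofReal (mul_nonneg (by linarith) (by positivity))]
  have hY (k : ℕ) : μ.real {ω | Y ω = k} = (1 - θ) * θ ^ k := by
    rw [← hX, measureReal_def, measureReal_def]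
    exact congrArg ENNReal.toReal (hXY.measure_mem_eq (.singleton k)).symm
  have hL₁ : Measurable fun ω => (∑ j ∈ range (X ω), ε j ω) + εp ω * Y ω :=
    (measurable_sum_range_of_measurable hXm hεm).add (hεpm.mul hYm)
  have hL₂ : Measurable fun ω => (∑ j ∈ range (X ω), (1 - ε j ω)) + (1 - εp ω) * Y ω :=
    (measurable_sum_range_of_measurable hXm fun j => (hεm j).const_sub 1).add
      ((hεpm.const_sub 1).mul hYm)
  have : IsProbabilityMeasure (μ.map X) := Measure.isProbabilityMeasure_map hXm.aemeasurable
  have : IsProbabilityMeasure (μ.map X) := Measure.isProbabilityMeasure_map hXm.aemeasurable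
  refine indepFun_of_measure_inter_preimage_singleton hL₁ hL₂ (μ.map X) (μ.map X) fun m n => ?_
  have hjoint := measureReal_linearForms hp0.le hp1.le hXm hYm hεpm hεm hεp01 hεpp hε01 hεP
    hindep hX hY m n
  rw [← hX, ← hX] at hjoint
  rw [Measure.map_apply hXm (.singleton m), Measure.map_apply hXm (.singleton n),
    ← ofReal_measureReal, ← ofReal_measureReal, ← ofReal_measureReal,
    ← ENNReal.ofReal_mul measureReal_nonneg]
  exact congrArg ENNReal.ofReal hjoint
end

section
/- Suppose the probability generating function 𝒫 of the ℕ-valued random variable X satisfies, for all real u, v with 0 ≤ u ≤ 1 and 0 ≤ v ≤ 1, the functional equation 𝒫((1-p)u + pv)·(p𝒫(u) + (1-p)𝒫(v)) = 𝒫((1-p)u + p)·(p𝒫(u) + (1-p)) · 𝒫((1-p) + pv)·(p + (1-p)𝒫(v)). Then 𝒫(0) > 0, i.e. P(X = 0) > 0. -/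
open MeasureTheory ProbabilityTheory

/-!
`𝒫(0) = P(X = 0) ≥ 0`, while `𝒫(t) > 0` for `0 < t ≤ 1`. At
`u = v = 0` the functional equation reads
`𝒫(0)² = 𝒫(p) (p 𝒫(0) + 1 - p) · 𝒫(1 - p) (p + (1 - p) 𝒫(0))`,
whose right-hand side would be `p (1 - p) 𝒫(p) 𝒫(1 - p) > 0` if `𝒫(0)` vanished.
-/

section PGF

variable {Ω : Type*} [MeasurableSpace Ω] {μ : Measure Ω} {X : Ω → ℕ}

lemma integrable_pow_of_mem_Icc [IsFiniteMeasure μ] (hX : Measurable X) {t : ℝ}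
    (ht : t ∈ Set.Icc (0 : ℝ) 1) : Integrable (fun ω ↦ t ^ X ω) μ :=
  (integrable_const (1 : ℝ)).mono' (measurable_const.pow hX).aestronglyMeasurable <|
    .of_forall fun ω ↦ by
      rw [Real.norm_of_nonneg (pow_nonneg ht.1 _)]
      exact pow_le_one₀ ht.1 ht.2

lemma integral_pow_pos [IsFiniteMeasure μ] [NeZero μ] (hX : Measurable X) {t : ℝ}
    (ht : t ∈ Set.Ioc (0 : ℝ) 1) : 0 < ∫ ω, t ^ X ω ∂μ := by
  rw [integral_pos_iff_support_of_nonneg (fun ω ↦ pow_nonneg ht.1.le _)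
    (integrable_pow_of_mem_Icc hX (Set.Ioc_subset_Icc_self ht)),
    Function.support_eq_univ fun ω ↦ pow_ne_zero _ ht.1.ne']
  exact Measure.measure_univ_pos.mpr (NeZero.ne μ)

lemma integral_zero_pow_eq_measureReal (hX : Measurable X) :
    ∫ ω, (0 : ℝ) ^ X ω ∂μ = μ.real {ω | X ω = 0} := by
  have hind : (fun ω ↦ (0 : ℝ) ^ X ω) = {ω | X ω = 0}.indicator 1 := by
    ext ω
    by_cases h : X ω = 0 <;> simp [h]
  rw [hind]
  exact integral_indicator_one (hX (measurableSet_singleton 0))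

end PGF

/-- If the probability generating function `𝒫` of an `ℕ`-valued random variable `X`
satisfies the independence functional equation on `[0,1] × [0,1]`, then
`𝒫(0) > 0`, i.e. `P(X = 0) > 0`. -/
theorem pgf_functional_equation_implies_pos_at_zero
    {Ω : Type*} [MeasurableSpace Ω] (μ : Measure Ω) [IsProbabilityMeasure μ]
    (p : ℝ) (hp0 : 0 < p) (hp1 : p < 1)
    (X : Ω → ℕ) (hXm : Measurable X)
    (P : ℝ → ℝ) (hP : ∀ t : ℝ, P t = ∫ ω, t ^ X ω ∂μ)
    (hfe : ∀ u v : ℝ, 0 ≤ u → u ≤ 1 → 0 ≤ v → v ≤ 1 →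
      P ((1 - p) * u + p * v) * (p * P u + (1 - p) * P v) =
        P ((1 - p) * u + p) * (p * P u + (1 - p)) *
          (P ((1 - p) + p * v) * (p + (1 - p) * P v))) :
    0 < P 0 ∧ 0 < μ {ω | X ω = 0} := by
  have hP0 : P 0 = μ.real {ω | X ω = 0} := by rw [hP, integral_zero_pow_eq_measureReal hXm]
  have hPp : 0 < P p := hP p ▸ integral_pow_pos hXm ⟨hp0, hp1.le⟩
  have hPq : 0 < P (1 - p) := hP (1 - p) ▸ integral_pow_pos hXm ⟨by linarith, by linarith⟩
  have hP0_ne : P 0 ≠ 0 := by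
    intro h0
    have h := hfe 0 0 le_rfl zero_le_one le_rfl zero_le_one
    simp only [mul_zero, add_zero, zero_add, h0] at h
    have hq : 0 < 1 - p := sub_pos.mpr hp1
    exact (mul_pos (mul_pos hPp hq) (mul_pos hPq hp0)).ne h
  have hP0_pos : 0 < P 0 := (hP0 ▸ measureReal_nonneg).lt_of_ne' hP0_ne
  refine ⟨hP0_pos, ?_⟩
  rw [hP0, measureReal_def] at hP0_pos
  exact (ENNReal.toReal_pos_iff.mp hP0_pos).1
end

section
/- Suppose X is Poisson distributed, i.e. there exists λ ≥ 0 with P(X = k) = e^{-λ} λ^k / k! for all k ∈ ℕ. Then the linear forms K₁ = X̃_{1-p} + Ỹ_{1-q} and K₂ = X̃_p + Ỹ_q are stochastically independent. -/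
/-!
Poisson thinning: if `N ~ Po(c)` and each of `N` points is kept independently with probability
`r`, then the numbers of kept and of discarded points are independent, with laws `Po(c r)` and
`Po(c (1 - r))`; this is the identity `Po(c){i + k} · C(i + k, i) rᶦ (1 - r)ᵏ = Po(c r){i} ·
Po(c (1 - r)){k}`. Since `Y` has the law of `X`, both pairs `(X̃_{1-p}, X̃_p)` and
`(Ỹ_{1-q}, Ỹ_q)` have independent components, and the pairs are independent of each other, so the
four thinned variables are mutually independent. `K₁` and `K₂` are functions of the disjoint
groups `(X̃_{1-p}, Ỹ_{1-q})` and `(X̃_p, Ỹ_q)`.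
-/

open MeasureTheory ProbabilityTheory Finset
open scoped ENNReal NNReal

lemma Nat.succ_choose_succ_mul_pow_mul_pow {R : Type*} [CommSemiring R] (r s : R) (n a : ℕ) :
    (n + 1).choose (a + 1) * r ^ (a + 1) * s ^ (n - a)
      = n.choose (a + 1) * r ^ (a + 1) * s ^ (n - (a + 1)) * s
        + n.choose a * r ^ a * s ^ (n - a) * r := by
  rw [Nat.choose_succ_succ', Nat.cast_add]
  rcases le_or_gt (a + 1) n with h | h
  · obtain ⟨k, rfl⟩ := Nat.exists_eq_add_of_le h
    rw [show a + 1 + k - a = k + 1 by omega, Nat.add_sub_cancel_left]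
    ring
  · rw [Nat.choose_eq_zero_of_lt h]
    ring

namespace ProbabilityTheory

lemma poissonMeasure_singleton_add_mul_choose (c r s : ℝ≥0) (hrs : r + s = 1) (i j : ℕ) :
    Po(c) {i + j} * ((i + j).choose i * (r : ℝ≥0∞) ^ i * (s : ℝ≥0∞) ^ j)
      = Po(c * r) {i} * Po(c * s) {j} := by
  simp only [poissonMeasure_singleton, ← ENNReal.ofReal_coe_nnreal, ← ENNReal.ofReal_natCast,
    ← ENNReal.ofReal_pow NNReal.zero_le_coe]
  rw [← ENNReal.ofReal_mul (by positivity), ← ENNReal.ofReal_mul (by positivity),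
    ← ENNReal.ofReal_mul (by positivity), ← ENNReal.ofReal_mul (by positivity)]
  congr 1
  have hrs' : (r : ℝ) + s = 1 := by exact_mod_cast hrs
  have hexp : Real.exp (-c) = Real.exp (-(c * r : ℝ≥0)) * Real.exp (-(c * s : ℝ≥0)) := by
    rw [← Real.exp_add]
    push_cast
    congr 1
    linear_combination (c : ℝ) * hrs'
  have hchoose : ((i + j).choose i : ℝ) * (i.factorial * j.factorial) = (i + j).factorial := by
    rw [Nat.choose_symm_add, ← mul_assoc]
    exact_mod_cast Nat.add_choose_mul_factorial_mul_factorial i j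
  rw [hexp]
  push_cast
  field_simp
  linear_combination ((c : ℝ) ^ (i + j) * r ^ i * s ^ j) * hchoose

section Interleave

variable {Ω β : Type*} {X Y : Ω → β} {ε εt : ℕ → Ω → β}

/-- The family `X, Y, ε 0, εt 0, ε 1, εt 1, …`. -/
def interleave (X Y : Ω → β) (ε εt : ℕ → Ω → β) (i : ℕ) : Ω → β :=
  if i = 0 then X else if i = 1 then Y
    else if (i - 2) % 2 = 0 then ε ((i - 2) / 2) else εt ((i - 2) / 2)

lemma interleave_even (k : Option ℕ) :
    interleave X Y ε εt (k.elim 0 (2 * · + 2)) = k.elim X ε := by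
  cases k <;> simp [interleave]

lemma interleave_odd (k : Option ℕ) :
    interleave X Y ε εt (k.elim 1 (2 * · + 3)) = k.elim Y εt := by
  rcases k with _ | j
  · simp [interleave]
  · simp [interleave]
    congr 1
    omega

end Interleave

variable {Ω : Type*} [MeasurableSpace Ω] {μ : Measure Ω}

lemma iIndepFun.indepFun_comp_of_disjoint_range {ι κ₁ κ₂ β : Type*} [MeasurableSpace β]
    {f : ι → Ω → β} (hf : ∀ i, Measurable (f i)) (h : iIndepFun f μ)
    {a : κ₁ → ι} {b : κ₂ → ι} (hab : Disjoint (Set.range a) (Set.range b)) :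
    IndepFun (fun ω k => f (a k) ω) (fun ω k => f (b k) ω) μ := by
  rw [IndepFun_iff_Indep]
  simp only [MeasurableSpace.pi, MeasurableSpace.comap_iSup, MeasurableSpace.comap_comp]
  have := indep_iSup_of_disjoint (fun i => (hf i).comap_le) h hab
  rwa [iSup_range, iSup_range] at this

lemma indepFun_of_measure_inter_preimage_singleton [IsFiniteMeasure μ] {α β : Type*}
    [MeasurableSpace α] [MeasurableSpace β] [Countable α] [Countable β]
    [MeasurableSingletonClass α] [MeasurableSingletonClass β] {A : Ω → α} {B : Ω → β}
    (hA : Measurable A) (hB : Measurable B)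
    (h : ∀ a b, μ (A ⁻¹' {a} ∩ B ⁻¹' {b}) = μ (A ⁻¹' {a}) * μ (B ⁻¹' {b})) :
    IndepFun A B μ := by
  rw [indepFun_iff_map_prod_eq_prod_map_map hA.aemeasurable hB.aemeasurable]
  refine Measure.ext_of_singleton fun ⟨a, b⟩ => ?_
  rw [Measure.map_apply (hA.prodMk hB) (measurableSet_singleton _), ← Set.singleton_prod_singleton,
    Set.mk_preimage_prod, Measure.prod_prod, Measure.map_apply hA (measurableSet_singleton _),
    Measure.map_apply hB (measurableSet_singleton _), h]

lemma IndepFun.prodProdProdComm [IsFiniteMeasure μ] {α β γ δ : Type*}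
    [MeasurableSpace α] [MeasurableSpace β] [MeasurableSpace γ] [MeasurableSpace δ]
    [Countable α] [Countable β] [Countable γ] [Countable δ]
    [MeasurableSingletonClass α] [MeasurableSingletonClass β]
    [MeasurableSingletonClass γ] [MeasurableSingletonClass δ]
    {A : Ω → α} {B : Ω → β} {C : Ω → γ} {D : Ω → δ}
    (hA : Measurable A) (hB : Measurable B) (hC : Measurable C) (hD : Measurable D)
    (h : IndepFun (fun ω => (A ω, B ω)) (fun ω => (C ω, D ω)) μ)
    (hAB : IndepFun A B μ) (hCD : IndepFun C D μ) :
    IndepFun (fun ω => (A ω, C ω)) (fun ω => (B ω, D ω)) μ := by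
  have hAC : IndepFun A C μ := h.comp measurable_fst measurable_fst
  have hBD : IndepFun B D μ := h.comp measurable_snd measurable_snd
  refine indepFun_of_measure_inter_preimage_singleton (hA.prodMk hC) (hB.prodMk hD)
    fun ⟨a, c⟩ ⟨b, d⟩ => ?_
  have hABCD := h.measure_inter_preimage_eq_mul ({a} ×ˢ {b}) ({c} ×ˢ {d}) .of_discrete .of_discrete
  simp only [← Set.singleton_prod_singleton, Set.mk_preimage_prod] at hABCD ⊢
  rw [Set.inter_inter_inter_comm, hABCD,
    hAB.measure_inter_preimage_eq_mul _ _ .of_discrete .of_discrete,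
    hCD.measure_inter_preimage_eq_mul _ _ .of_discrete .of_discrete,
    hAC.measure_inter_preimage_eq_mul _ _ .of_discrete .of_discrete,
    hBD.measure_inter_preimage_eq_mul _ _ .of_discrete .of_discrete]
  ring

lemma indepFun_of_hasLaw_prod [IsFiniteMeasure μ] {α β : Type*} [MeasurableSpace α]
    [MeasurableSpace β] {A : Ω → α} {B : Ω → β} {ν : Measure α} {ν' : Measure β}
    [IsProbabilityMeasure ν] [IsProbabilityMeasure ν']
    (h : HasLaw (fun ω => (A ω, B ω)) (ν.prod ν') μ) : IndepFun A B μ := by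
  have hA : HasLaw A ν μ :=
    HasLaw.comp (X := fun ω => (A ω, B ω)) ⟨measurable_fst.aemeasurable, by simp⟩ h
  have hB : HasLaw B ν' μ :=
    HasLaw.comp (X := fun ω => (A ω, B ω)) ⟨measurable_snd.aemeasurable, by simp⟩ h
  exact (indepFun_iff_hasLaw_prodMk_prod hA hB).2 h

lemma measure_sum_range_eq_choose_mul [IsProbabilityMeasure μ] {e : ℕ → Ω → ℕ}
    (he : ∀ j, Measurable (e j)) (he01 : ∀ j ω, e j ω ≤ 1) (hind : iIndepFun e μ) {r : ℝ≥0∞}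
    (hr : ∀ j, μ {ω | e j ω = 1} = r) (n a : ℕ) :
    μ {ω | ∑ j ∈ range n, e j ω = a} = n.choose a * r ^ a * (1 - r) ^ (n - a) := by
  have hr0 : ∀ j, μ {ω | e j ω = 0} = 1 - r := fun j => by
    rw [← hr j, ← prob_compl_eq_one_sub (s := {ω | e j ω = 1}) (he j (measurableSet_singleton 1))]
    congr 1
    ext ω
    simp only [Set.mem_ofPred_eq, Set.mem_compl_iff]
    have := he01 j ω
    omega
  have hsplit : ∀ n a c, μ ({ω | ∑ j ∈ range n, e j ω = a} ∩ {ω | e n ω = c})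
      = μ {ω | ∑ j ∈ range n, e j ω = a} * μ {ω | e n ω = c} := fun n a c => by
    have := (hind.indepFun_finsetSum_of_notMem he (s := range n) (i := n) (by simp))
      |>.measure_inter_preimage_eq_mul _ _ (measurableSet_singleton a) (measurableSet_singleton c)
    simp only [Set.preimage, Set.mem_singleton_iff, Finset.sum_apply] at this
    exact this
  induction n generalizing a with
  | zero => cases a <;> simp
  | succ n ih =>
    cases a with
    | zero =>
      have hev : {ω | ∑ j ∈ range (n + 1), e j ω = 0}
          = {ω | ∑ j ∈ range n, e j ω = 0} ∩ {ω | e n ω = 0} := by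
        ext ω
        simp only [Set.mem_ofPred_eq, Set.mem_inter_iff, sum_range_succ]
        omega
      rw [hev, hsplit, ih, hr0]
      simp [pow_succ]
    | succ a =>
      have hev : {ω | ∑ j ∈ range (n + 1), e j ω = a + 1}
          = ({ω | ∑ j ∈ range n, e j ω = a + 1} ∩ {ω | e n ω = 0})
            ∪ ({ω | ∑ j ∈ range n, e j ω = a} ∩ {ω | e n ω = 1}) := by
        ext ω
        simp only [Set.mem_ofPred_eq, Set.mem_inter_iff, Set.mem_union, sum_range_succ]
        have := he01 n ω
        omega
      have hdisj : Disjoint ({ω | ∑ j ∈ range n, e j ω = a + 1} ∩ {ω | e n ω = 0})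
          ({ω | ∑ j ∈ range n, e j ω = a} ∩ {ω | e n ω = 1}) :=
        Set.disjoint_left.2 fun ω h0 h1 => by simp_all
      have hmeas : MeasurableSet ({ω | ∑ j ∈ range n, e j ω = a} ∩ {ω | e n ω = 1}) :=
        (Finset.measurable_sum _ fun j _ => he j) (measurableSet_singleton a)
          |>.inter (he n (measurableSet_singleton 1))
      rw [hev, measure_union hdisj hmeas, hsplit, hsplit, ih, ih, hr, hr0, Nat.succ_sub_succ,
        Nat.succ_choose_succ_mul_pow_mul_pow]

/-- `thinning X ε = (X̃_{1-p}, X̃_p)`. -/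
def thinning (n : ℕ) (e : ℕ → ℕ) : ℕ × ℕ :=
  (∑ j ∈ range n, e j, ∑ j ∈ range n, (1 - e j))

lemma thinning_eq_iff {n : ℕ} {e : ℕ → ℕ} (he : ∀ j, e j ≤ 1) {i k : ℕ} :
    thinning n e = (i, k) ↔ n = i + k ∧ ∑ j ∈ range n, e j = i := by
  have hsum : (thinning n e).1 + (thinning n e).2 = n := by
    simp only [thinning, ← sum_add_distrib, Nat.add_sub_cancel' (he _), sum_const, card_range,
      smul_eq_mul, mul_one]
  rw [Prod.ext_iff]
  simp only [thinning] at hsum ⊢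
  omega

lemma measurable_thinning : Measurable fun p : ℕ × (ℕ → ℕ) => thinning p.1 p.2 :=
  measurable_from_prod_countable_right fun n => by
    simp only [thinning]
    fun_prop

lemma Measurable.thinning {N : Ω → ℕ} {e : ℕ → Ω → ℕ} (hN : Measurable N)
    (he : ∀ j, Measurable (e j)) : Measurable fun ω => thinning (N ω) (e · ω) :=
  measurable_thinning.comp (hN.prodMk (measurable_pi_lambda _ he))

theorem hasLaw_thinning [IsProbabilityMeasure μ] {N : Ω → ℕ} {e : ℕ → Ω → ℕ} {c r : ℝ≥0}
    (hN : Measurable N) (he : ∀ j, Measurable (e j)) (he01 : ∀ j ω, e j ω ≤ 1)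
    (hind : iIndepFun (fun k : Option ℕ => k.elim N e) μ) (hNlaw : HasLaw N Po(c) μ)
    (hr : ∀ j, μ {ω | e j ω = 1} = r) :
    HasLaw (fun ω => thinning (N ω) (e · ω)) (Po(c * r).prod Po(c * (1 - r))) μ := by
  have hr1 : r ≤ 1 := by
    have := prob_le_one (μ := μ) (s := {ω | e 0 ω = 1})
    rw [hr 0] at this
    exact_mod_cast this
  have he_ind : iIndepFun e μ := hind.precomp (g := some) (Option.some_injective ℕ)
  have hNe : IndepFun N (fun ω j => e j ω) μ :=
    (hind.indepFun_comp_of_disjoint_range (fun k => by cases k <;> simp [hN, he])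
      (a := fun _ : Unit => none) (b := some) (by simp)).comp
      (measurable_pi_apply ()) measurable_id
  refine ⟨(hN.thinning he).aemeasurable, Measure.ext_of_singleton fun ⟨i, k⟩ => ?_⟩
  have hpre : (fun ω => thinning (N ω) (e · ω)) ⁻¹' {(i, k)}
      = N ⁻¹' {i + k} ∩ (fun ω j => e j ω) ⁻¹' {f | ∑ j ∈ range (i + k), f j = i} := by
    ext ω
    simp only [Set.mem_preimage, Set.mem_singleton_iff, thinning_eq_iff (he01 · ω),
      Set.mem_inter_iff, Set.mem_ofPred_eq]
    exact and_congr_right fun h => by rw [h]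
  have hsum : MeasurableSet {f : ℕ → ℕ | ∑ j ∈ range (i + k), f j = i} :=
    (Finset.measurable_sum _ fun j _ => measurable_pi_apply j) (measurableSet_singleton i)
  have hbinom := measure_sum_range_eq_choose_mul he he01 he_ind hr (i + k) i
  rw [Nat.add_sub_cancel_left, ← ENNReal.coe_one, ← ENNReal.coe_sub] at hbinom
  rw [Measure.map_apply (hN.thinning he) (measurableSet_singleton _), hpre,
    hNe.measure_inter_preimage_eq_mul _ _ (measurableSet_singleton _) hsum,
    ← Set.singleton_prod_singleton, Measure.prod_prod,
    ← poissonMeasure_singleton_add_mul_choose c r (1 - r) (add_tsub_cancel_of_le hr1),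
    ← hNlaw.map_eq, Measure.map_apply hN (measurableSet_singleton _)]
  exact congrArg _ hbinom

section Interleave

variable {β : Type*} [MeasurableSpace β] {X Y : Ω → β} {ε εt : ℕ → Ω → β}

lemma iIndepFun.interleave_even (h : iIndepFun (interleave X Y ε εt) μ) :
    iIndepFun (fun k : Option ℕ => k.elim X ε) μ := by
  have hinj : Function.Injective fun k : Option ℕ => k.elim 0 (2 * · + 2) := by
    rintro (_ | j) (_ | j') h <;> simp at h ⊢
    omega
  simpa only [ProbabilityTheory.interleave_even] using h.precomp hinj

lemma iIndepFun.interleave_odd (h : iIndepFun (interleave X Y ε εt) μ) :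
    iIndepFun (fun k : Option ℕ => k.elim Y εt) μ := by
  have hinj : Function.Injective fun k : Option ℕ => k.elim 1 (2 * · + 3) := by
    rintro (_ | j) (_ | j') h <;> simp at h ⊢
    omega
  simpa only [ProbabilityTheory.interleave_odd] using h.precomp hinj

lemma iIndepFun.indepFun_interleave (hX : Measurable X) (hY : Measurable Y)
    (hε : ∀ j, Measurable (ε j)) (hεt : ∀ j, Measurable (εt j))
    (h : iIndepFun (interleave X Y ε εt) μ) :
    IndepFun (fun ω => (X ω, (ε · ω))) (fun ω => (Y ω, (εt · ω))) μ := by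
  have hm : ∀ i, Measurable (interleave X Y ε εt i) := fun i => by
    unfold interleave
    split_ifs <;> simp [hX, hY, hε, hεt]
  have hdisj : Disjoint (Set.range fun k : Option ℕ => k.elim 0 (2 * · + 2))
      (Set.range fun k : Option ℕ => k.elim 1 (2 * · + 3)) := by
    refine Set.disjoint_left.2 ?_
    rintro _ ⟨k, rfl⟩ ⟨k', h⟩
    cases k <;> cases k' <;> simp at h
    omega
  have hsplit : Measurable fun g : Option ℕ → β => (g none, fun j => g (some j)) := by fun_prop
  have := (h.indepFun_comp_of_disjoint_range hm hdisj).comp hsplit hsplit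
  simp only [ProbabilityTheory.interleave_even, ProbabilityTheory.interleave_odd] at this
  exact this

end Interleave

end ProbabilityTheory

theorem poisson_implies_indep_linear_forms_general
    {Ω : Type*} [MeasurableSpace Ω] (μ : Measure Ω) [IsProbabilityMeasure μ]
    (p q : ℝ)
    (X Y : Ω → ℕ) (ε εt : ℕ → Ω → ℕ)
    (hXm : Measurable X) (hYm : Measurable Y)
    (hεm : ∀ j, Measurable (ε j)) (hεtm : ∀ j, Measurable (εt j))
    -- X and Y are identically distributed
    (hXY : IdentDistrib X Y μ μ)
    -- each ε_j is a Bernoulli random variable with parameter 1 - p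
    (hε01 : ∀ j ω, ε j ω ≤ 1)
    (hεP : ∀ j, μ {ω | ε j ω = 1} = ENNReal.ofReal (1 - p))
    -- each ε̃_j is a Bernoulli random variable with parameter 1 - q
    (hεt01 : ∀ j ω, εt j ω ≤ 1)
    (hεtP : ∀ j, μ {ω | εt j ω = 1} = ENNReal.ofReal (1 - q))
    -- X, Y, the ε_j's and the ε̃_j's are mutually independent
    (hindep : iIndepFun
      (fun i : ℕ => if i = 0 then X else if i = 1 then Y
        else if (i - 2) % 2 = 0 then ε ((i - 2) / 2) else εt ((i - 2) / 2)) μ)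
    -- X is Poisson distributed
    (hpois : ∃ l : ℝ, 0 ≤ l ∧ ∀ k : ℕ,
      μ {ω | X ω = k} = ENNReal.ofReal (Real.exp (-l) * l ^ k / k.factorial)) :
    IndepFun
      (fun ω => (∑ j ∈ Finset.range (X ω), ε j ω) +
        ∑ j ∈ Finset.range (Y ω), εt j ω)
      (fun ω => (∑ j ∈ Finset.range (X ω), (1 - ε j ω)) +
        ∑ j ∈ Finset.range (Y ω), (1 - εt j ω)) μ := by
  obtain ⟨l, hl, hXpois⟩ := hpois
  change iIndepFun (interleave X Y ε εt) μ at hindep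
  set c : ℝ≥0 := ⟨l, hl⟩
  have hX : HasLaw X Po(c) μ := ⟨hXm.aemeasurable, Measure.ext_of_singleton fun k => by
    rw [Measure.map_apply hXm (measurableSet_singleton k), poissonMeasure_singleton]
    exact hXpois k⟩
  have hY : HasLaw Y Po(c) μ := ⟨hYm.aemeasurable, hXY.map_eq ▸ hX.map_eq⟩
  have hST := hasLaw_thinning hXm hεm hε01 hindep.interleave_even hX hεP
  have hUV := hasLaw_thinning hYm hεtm hεt01 hindep.interleave_odd hY hεtP
  have hpairs := (hindep.indepFun_interleave hXm hYm hεm hεtm).comp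
    measurable_thinning measurable_thinning
  have hSTm := hXm.thinning hεm
  have hUVm := hYm.thinning hεtm
  exact (hpairs.prodProdProdComm hSTm.fst hSTm.snd hUVm.fst hUVm.snd
    (indepFun_of_hasLaw_prod hST) (indepFun_of_hasLaw_prod hUV)).comp measurable_add measurable_add

/-- If `X` is Poisson distributed, then the linear forms
`K₁ = X̃_{1-p} + Ỹ_{1-q}` and `K₂ = X̃_p + Ỹ_q` are independent. -/
theorem poisson_implies_indep_linear_forms
    {Ω : Type*} [MeasurableSpace Ω] (μ : Measure Ω) [IsProbabilityMeasure μ]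
    (p q : ℝ) (hp0 : 0 < p) (hp1 : p < 1) (hq0 : 0 < q) (hq1 : q < 1)
    (X Y : Ω → ℕ) (ε εt : ℕ → Ω → ℕ)
    (hXm : Measurable X) (hYm : Measurable Y)
    (hεm : ∀ j, Measurable (ε j)) (hεtm : ∀ j, Measurable (εt j))
    -- X and Y are identically distributed
    (hXY : IdentDistrib X Y μ μ)
    -- each ε_j is a Bernoulli random variable with parameter 1 - p
    (hε01 : ∀ j ω, ε j ω ≤ 1)
    (hεP : ∀ j, μ {ω | ε j ω = 1} = ENNReal.ofReal (1 - p))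
    -- each ε̃_j is a Bernoulli random variable with parameter 1 - q
    (hεt01 : ∀ j ω, εt j ω ≤ 1)
    (hεtP : ∀ j, μ {ω | εt j ω = 1} = ENNReal.ofReal (1 - q))
    -- X, Y, the ε_j's and the ε̃_j's are mutually independent
    (hindep : iIndepFun
      (fun i : ℕ => if i = 0 then X else if i = 1 then Y
        else if (i - 2) % 2 = 0 then ε ((i - 2) / 2) else εt ((i - 2) / 2)) μ)
    -- X is Poisson distributed
    (hpois : ∃ l : ℝ, 0 ≤ l ∧ ∀ k : ℕ,
      μ {ω | X ω = k} = ENNReal.ofReal (Real.exp (-l) * l ^ k / k.factorial)) :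
    IndepFun
      (fun ω => (∑ j ∈ Finset.range (X ω), ε j ω) +
        ∑ j ∈ Finset.range (Y ω), εt j ω)
      (fun ω => (∑ j ∈ Finset.range (X ω), (1 - ε j ω)) +
        ∑ j ∈ Finset.range (Y ω), (1 - εt j ω)) μ :=
  poisson_implies_indep_linear_forms_general μ p q X Y ε εt hXm hYm hεm hεtm hXY hε01 hεP hεt01 hεtP
    hindep hpois
end

section
/- Suppose the linear forms K₁ = X̃_{1-p} + Ỹ_{1-q} and K₂ = X̃_p + Ỹ_q are stochastically independent. Then X is Poisson distributed: there exists λ ≥ 0 with P(X = k) = e^{-λ} λ^k / k! for all k ∈ ℕ. -/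
/-!
Let `G` be the generating function of the law of `X`. Since `X` and `Y` are identically
distributed and independent of the thinning coins, the joint generating function of the linear
forms is `F(s, t) = E[s^K₁ t^K₂] = G((1-p)s + pt) · G((1-q)s + qt)`, and independence of `K₁`
and `K₂` means `F(s, t) = F(s, 1) F(1, t)`. As a power series `G` is analytic and positive on
`(0, 1)`, hence so is `φ = log G`, and the mixed derivative `∂s∂t` of
`φ((1-p)s + pt) + φ((1-q)s + qt)` vanishes; on the diagonal this reads
`((1-p)p + (1-q)q) φ'' = 0`. So `G(x) = exp(βx + γ)` on `(0, 1)`, comparing coefficients gives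
`P(X = k) = e^γ β^k / k!`, and `G(1) = 1` forces `γ = -β`.
-/

open MeasureTheory ProbabilityTheory Set Topology FormalMultilinearSeries
open scoped ENNReal NNReal

section PowerSeries

lemma hasFPowerSeriesOnBall_ofScalarsSum {α : ℕ → ℝ} (hα : Summable α) :
    HasFPowerSeriesOnBall (ofScalarsSum α) (ofScalars ℝ α) 0 1 := by
  have hr : ((1 : ℝ≥0) : ℝ≥0∞) ≤ (ofScalars ℝ α).radius :=
    (ofScalars ℝ α).le_radius_of_summable_norm (by simpa [ofScalars_norm] using hα.norm)
  exact ((ofScalars ℝ α).hasFPowerSeriesOnBall (one_pos.trans_le hr)).mono one_pos hr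

lemma ofScalarsSum_pos {α : ℕ → ℝ} (hα0 : ∀ k, 0 ≤ α k) (hα : Summable α) {k₀ : ℕ}
    (hk₀ : 0 < α k₀) {x : ℝ} (hx : x ∈ Ioc (0 : ℝ) 1) : 0 < ofScalarsSum α x := by
  have hterm : ∀ k, 0 ≤ α k * x ^ k := fun k => mul_nonneg (hα0 k) (pow_nonneg hx.1.le k)
  simp only [ofScalarsSum_eq_tsum, smul_eq_mul]
  exact (hα.of_nonneg_of_le hterm fun k =>
    mul_le_of_le_one_right (hα0 k) (pow_le_one₀ hx.1.le hx.2)).tsum_pos hterm k₀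
      (mul_pos hk₀ (pow_pos hx.1 k₀))

lemma eq_of_ofScalarsSum_eqOn_Ioo {α δ : ℕ → ℝ} (hα : Summable α) (hδ : Summable δ)
    (h : ∀ x ∈ Ioo (0 : ℝ) 1, ofScalarsSum α x = ofScalarsSum δ x) : α = δ := by
  have hfα := (hasFPowerSeriesOnBall_ofScalarsSum hα).hasFPowerSeriesAt
  have hfδ := (hasFPowerSeriesOnBall_ofScalarsSum hδ).hasFPowerSeriesAt
  have hev : ofScalarsSum α =ᶠ[𝓝 (0 : ℝ)] ofScalarsSum δ :=
    (hfα.analyticAt.frequently_eq_iff_eventually_eq hfδ.analyticAt).1 <|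
      (Filter.Eventually.frequently (Filter.mem_of_superset (Ioo_mem_nhdsGT one_pos) h)).filter_mono
        (nhdsGT_le_nhdsNE 0)
  exact ofScalars_series_injective ℝ ℝ (hfα.eq_formalMultilinearSeries (hfδ.congr hev.symm))

lemma ofScalarsSum_exp_mul_pow_div_factorial (β γ x : ℝ) :
    ofScalarsSum (fun k => Real.exp γ * β ^ k / k.factorial) x = Real.exp (β * x + γ) := by
  rw [ofScalarsSum_eq_tsum, Real.exp_add, Real.exp_eq_exp_ℝ, NormedSpace.exp_eq_tsum_div,
    mul_comm, ← tsum_mul_left]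
  refine tsum_congr fun k => ?_
  simp only [smul_eq_mul, mul_pow]
  ring

lemma poisson_of_ofScalarsSum_eq_exp {α : ℕ → ℝ} (hα0 : ∀ k, 0 ≤ α k) (hα : HasSum α 1)
    {β γ : ℝ} (h : ∀ x ∈ Ioo (0 : ℝ) 1, ofScalarsSum α x = Real.exp (β * x + γ)) :
    0 ≤ β ∧ ∀ k, α k = Real.exp (-β) * β ^ k / k.factorial := by
  have hδ : Summable fun k => Real.exp γ * β ^ k / k.factorial := by
    simpa only [mul_div_assoc] using (Real.summable_pow_div_factorial β).mul_left (Real.exp γ)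
  have hαδ := eq_of_ofScalarsSum_eqOn_Ioo hα.summable hδ fun x hx =>
    (h x hx).trans (ofScalarsSum_exp_mul_pow_div_factorial β γ x).symm
  have hγ : γ = -β := by
    have h1 := ofScalarsSum_exp_mul_pow_div_factorial β γ 1
    rw [← hαδ, ofScalarsSum_eq_tsum] at h1
    simp only [one_pow, smul_eq_mul, mul_one, hα.tsum_eq] at h1
    linarith [(Real.exp_eq_one_iff _).1 h1.symm]
  subst hγ
  refine ⟨?_, fun k => by rw [hαδ]⟩
  have h1 := hα0 1
  rw [hαδ] at h1
  simp only [pow_one, Nat.factorial_one, Nat.cast_one, div_one] at h1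
  exact nonneg_of_mul_nonneg_right (by rwa [mul_comm] at h1) (Real.exp_pos _)

end PowerSeries

section FunctionalEquation

lemma Convex.one_sub_mul_add_mul_mem {S : Set ℝ} (hS : Convex ℝ S) ⦃r s t : ℝ⦄ (hr0 : 0 ≤ r)
    (hr1 : r ≤ 1) (hs : s ∈ S) (ht : t ∈ S) : (1 - r) * s + r * t ∈ S :=
  hS hs ht (by linarith) hr0 (by ring)

lemma HasDerivAt.eq_zero_of_eqOn_const {F : ℝ → ℝ} {D x c : ℝ} {U : Set ℝ} (hU : IsOpen U)
    (hx : x ∈ U) (hF : ∀ y ∈ U, F y = c) (hD : HasDerivAt F D x) : D = 0 :=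
  hD.unique <| (hasDerivAt_const x c).congr_of_eventuallyEq <|
    Filter.mem_of_superset (hU.mem_nhds hx) hF

lemma deriv_deriv_eq_zero_of_add_eq_add {φ u v : ℝ → ℝ} {p q : ℝ}
    (hp0 : 0 < p) (hp1 : p < 1) (hq0 : 0 ≤ q) (hq1 : q ≤ 1)
    (hφ : DifferentiableOn ℝ φ (Ioo 0 1)) (hφ' : DifferentiableOn ℝ (deriv φ) (Ioo 0 1))
    (h : ∀ s ∈ Ioo (0 : ℝ) 1, ∀ t ∈ Ioo (0 : ℝ) 1,
      φ ((1 - p) * s + p * t) + φ ((1 - q) * s + q * t) = u s + v t) :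
    ∀ x ∈ Ioo (0 : ℝ) 1, deriv (deriv φ) x = 0 := by
  have hmem := (convex_Ioo (0 : ℝ) 1).one_sub_mul_add_mul_mem
  have hcomp : ∀ {ψ : ℝ → ℝ}, DifferentiableOn ℝ ψ (Ioo 0 1) → ∀ {a b x : ℝ},
      a + b * x ∈ Ioo (0 : ℝ) 1 →
        HasDerivAt (fun y => ψ (a + b * y)) (deriv ψ (a + b * x) * b) x :=
    fun hψ a b x hx => ((hψ.differentiableAt (isOpen_Ioo.mem_nhds hx)).hasDerivAt).comp x
      (((hasDerivAt_id x).const_mul b).const_add a |>.congr_deriv (mul_one b))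
  -- differentiating `h` in `t` kills `u`: the `t`-derivative of the left side is independent of `s`
  have hslope : ∀ t ∈ Ioo (0 : ℝ) 1, ∀ s ∈ Ioo (0 : ℝ) 1,
      deriv φ ((1 - p) * s + p * t) * p + deriv φ ((1 - q) * s + q * t) * q =
        deriv φ t * p + deriv φ t * q := by
    intro t ht s hs
    have hD := ((hcomp hφ (hmem hp0.le hp1.le hs ht)).add (hcomp hφ (hmem hq0 hq1 hs ht))).sub
      ((hcomp hφ (hmem hp0.le hp1.le ht ht)).add (hcomp hφ (hmem hq0 hq1 ht ht)))
    have h0 := hD.eq_zero_of_eqOn_const isOpen_Ioo ht (c := u s - u t) fun τ hτ => by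
      simp only [Pi.add_apply, Pi.sub_apply]
      linarith [h s hs τ hτ, h t ht τ hτ]
    rw [show (1 - p) * t + p * t = t by ring, show (1 - q) * t + q * t = t by ring] at h0
    linarith
  -- differentiating once more, now in `s` at `s = t`
  intro t ht
  have hD :=
    ((hcomp hφ' (a := p * t) (b := 1 - p) (x := t) (by convert ht using 1; ring)).mul_const p).add
      ((hcomp hφ' (a := q * t) (b := 1 - q) (x := t) (by convert ht using 1; ring)).mul_const q)
  have h0 := hD.eq_zero_of_eqOn_const isOpen_Ioo ht (c := deriv φ t * p + deriv φ t * q)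
    fun σ hσ => by
      simp only [Pi.add_apply]
      rw [← hslope t ht σ hσ, add_comm (p * t), add_comm (q * t)]
  rw [show p * t + (1 - p) * t = t by ring, show q * t + (1 - q) * t = t by ring] at h0
  have hpos : 0 < (1 - p) * p + (1 - q) * q := by nlinarith
  nlinarith

lemma exists_eq_mul_add_of_deriv_deriv_eq_zero {φ : ℝ → ℝ} {U : Set ℝ} (hU : IsOpen U)
    (hU' : IsPreconnected U) (hφ : DifferentiableOn ℝ φ U)
    (hφ' : DifferentiableOn ℝ (deriv φ) U) (h : ∀ x ∈ U, deriv (deriv φ) x = 0) :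
    ∃ β γ : ℝ, ∀ x ∈ U, φ x = β * x + γ := by
  obtain ⟨β, hβ⟩ := hU.exists_is_const_of_deriv_eq_zero hU' hφ' h
  have hdiff : DifferentiableOn ℝ (fun x => φ x - β * x) U := hφ.sub (by fun_prop)
  obtain ⟨γ, hγ⟩ := hU.exists_is_const_of_deriv_eq_zero hU' hdiff fun x hx => by
    have hφx := (hφ.differentiableAt (hU.mem_nhds hx)).hasDerivAt
    have hlin : HasDerivAt (fun y => β * y) β x := by simpa using (hasDerivAt_id x).const_mul β
    change deriv (φ - fun y => β * y) x = 0
    rw [(hφx.sub hlin).deriv, hβ x hx, sub_self]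
  exact ⟨β, γ, fun x hx => by linarith [hγ x hx]⟩

theorem poisson_of_pgf_functional_equation {p q : ℝ} (hp0 : 0 < p) (hp1 : p < 1) (hq0 : 0 ≤ q)
    (hq1 : q ≤ 1) {α : ℕ → ℝ} (hα0 : ∀ k, 0 ≤ α k) (hα : HasSum α 1)
    (h : ∀ s ∈ Ioo (0 : ℝ) 1, ∀ t ∈ Ioo (0 : ℝ) 1,
      ofScalarsSum α ((1 - p) * s + p * t) * ofScalarsSum α ((1 - q) * s + q * t) =
        (ofScalarsSum α ((1 - p) * s + p * 1) * ofScalarsSum α ((1 - q) * s + q * 1)) *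
          (ofScalarsSum α ((1 - p) * 1 + p * t) * ofScalarsSum α ((1 - q) * 1 + q * t))) :
    ∃ l : ℝ, 0 ≤ l ∧ ∀ k, α k = Real.exp (-l) * l ^ k / k.factorial := by
  obtain ⟨k₀, hk₀⟩ : ∃ k, 0 < α k := by
    by_contra! H
    have : α = 0 := funext fun k => le_antisymm (H k) (hα0 k)
    exact one_ne_zero (hα.unique (by rw [this]; exact hasSum_zero))
  have hpos : ∀ x ∈ Ioc (0 : ℝ) 1, 0 < ofScalarsSum α x := fun x hx =>
    ofScalarsSum_pos hα0 hα.summable hk₀ hx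
  have hball : Ioo (0 : ℝ) 1 ⊆ Metric.eball 0 1 := fun x hx => by
    simpa [Real.enorm_eq_ofReal_abs, abs_of_pos hx.1] using hx.2
  have hlog : AnalyticOnNhd ℝ (fun x => Real.log (ofScalarsSum α x)) (Ioo 0 1) :=
    ((hasFPowerSeriesOnBall_ofScalarsSum hα.summable).analyticOnNhd.mono hball).log
      fun x hx => hpos x (Ioo_subset_Ioc_self hx)
  have hmem : ∀ {r}, 0 ≤ r → r ≤ 1 → ∀ {s t}, s ∈ Ioc (0 : ℝ) 1 → t ∈ Ioc (0 : ℝ) 1 →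
      0 < ofScalarsSum α ((1 - r) * s + r * t) :=
    fun hr0 hr1 _ _ hs ht => hpos _ ((convex_Ioc 0 1).one_sub_mul_add_mul_mem hr0 hr1 hs ht)
  have hone : (1 : ℝ) ∈ Ioc 0 1 := ⟨one_pos, le_rfl⟩
  have hadd : ∀ s ∈ Ioo (0 : ℝ) 1, ∀ t ∈ Ioo (0 : ℝ) 1,
      Real.log (ofScalarsSum α ((1 - p) * s + p * t)) +
        Real.log (ofScalarsSum α ((1 - q) * s + q * t)) =
      Real.log (ofScalarsSum α ((1 - p) * s + p * 1) * ofScalarsSum α ((1 - q) * s + q * 1)) +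
        Real.log (ofScalarsSum α ((1 - p) * 1 + p * t) * ofScalarsSum α ((1 - q) * 1 + q * t)) := by
    intro s hs' t ht'
    have hs := Ioo_subset_Ioc_self hs'
    have ht := Ioo_subset_Ioc_self ht'
    rw [← Real.log_mul (hmem hp0.le hp1.le hs ht).ne' (hmem hq0 hq1 hs ht).ne', h s hs' t ht',
      Real.log_mul (mul_pos (hmem hp0.le hp1.le hs hone) (hmem hq0 hq1 hs hone)).ne'
        (mul_pos (hmem hp0.le hp1.le hone ht) (hmem hq0 hq1 hone ht)).ne']
  obtain ⟨β, γ, hβγ⟩ := exists_eq_mul_add_of_deriv_deriv_eq_zero isOpen_Ioo isPreconnected_Ioo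
    hlog.differentiableOn hlog.deriv.differentiableOn
    (deriv_deriv_eq_zero_of_add_eq_add hp0 hp1 hq0 hq1 hlog.differentiableOn
      hlog.deriv.differentiableOn hadd)
  obtain ⟨hβ, hαβ⟩ := poisson_of_ofScalarsSum_eq_exp hα0 hα fun x hx => by
    rw [← hβγ x hx, Real.exp_log (hpos x (Ioo_subset_Ioc_self hx))]
  exact ⟨β, hβ, hαβ⟩

end FunctionalEquation

section Thinning

open Finset

variable {Ω : Type*} [MeasurableSpace Ω] {μ : Measure Ω}

lemma iIndepFun_sumElim_of_interleaved {X Y : Ω → ℕ} {ε εt : ℕ → Ω → ℕ}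
    (h : iIndepFun (fun i : ℕ => if i = 0 then X else if i = 1 then Y
      else if (i - 2) % 2 = 0 then ε ((i - 2) / 2) else εt ((i - 2) / 2)) μ) :
    iIndepFun (Sum.elim ![X, Y] (Sum.elim ε εt)) μ := by
  let e : Fin 2 ⊕ (ℕ ⊕ ℕ) → ℕ :=
    Sum.elim (fun i => i) (Sum.elim (fun j => 2 * j + 2) (fun j => 2 * j + 3))
  have he : e.Injective := by
    rintro (i | i | i) (j | j | j) hij <;> simp only [e, Sum.elim_inl, Sum.elim_inr] at hij <;>
      first | omega | (congr 1; omega) | (congr 2; omega)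
  convert h.precomp he using 1
  funext i
  rcases i with i | j | j
  · fin_cases i <;> rfl
  · simp [e]
  · simp [e, show (2 * j + 1) / 2 = j by omega]

lemma measurable_sum_range_apply {N : Ω → ℕ} {B : ℕ → Ω → ℕ} (hN : Measurable N)
    (hB : ∀ j, Measurable (B j)) : Measurable fun ω => ∑ j ∈ range (N ω), B j ω := by
  refine measurable_to_countable' fun k => ?_
  have : (fun ω => ∑ j ∈ range (N ω), B j ω) ⁻¹' {k} =
      ⋃ m : ℕ, {ω | N ω = m} ∩ {ω | ∑ j ∈ range m, B j ω = k} := by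
    ext ω
    simp
  rw [this]
  exact .iUnion fun m => (hN (measurableSet_singleton m)).inter
    ((Finset.measurable_sum _ fun j _ => hB j) (measurableSet_singleton k))

lemma hasSum_measureReal_fiber [IsProbabilityMeasure μ] {N : Ω → ℕ} (hN : Measurable N) :
    HasSum (fun k => μ.real {ω | N ω = k}) 1 := by
  have h : ∑' k, μ {ω | N ω = k} = 1 := by
    rw [← tsum_univ]
    exact (tsum_measure_preimage_singleton Set.countable_univ
      fun k _ => hN (measurableSet_singleton k)).trans (by simp)
  have htoReal := ENNReal.tsum_toReal_eq fun k => measure_ne_top μ {ω | N ω = k}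
  rw [h, ENNReal.toReal_one] at htoReal
  exact htoReal ▸ (ENNReal.summable_toReal (h ▸ ENNReal.one_ne_top)).hasSum

lemma lintegral_indicator_singleton_comp {N : Ω → ℕ} (hN : Measurable N) (m : ℕ) :
    ∫⁻ ω, ({m} : Set ℕ).indicator 1 (N ω) ∂μ = μ {ω | N ω = m} := by
  simp_rw [← Set.indicator_comp_right N]
  exact lintegral_indicator_one (hN (measurableSet_singleton m))

lemma lintegral_pow_mul_pow_one_sub [IsProbabilityMeasure μ] {B : Ω → ℕ} (hB : Measurable B)
    (hB1 : ∀ ω, B ω ≤ 1) (S T : ℝ≥0∞) :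
    ∫⁻ ω, S ^ B ω * T ^ (1 - B ω) ∂μ = μ {ω | B ω = 1} * S + (1 - μ {ω | B ω = 1}) * T := by
  have hs : MeasurableSet {ω | B ω = 1} := hB (measurableSet_singleton 1)
  have hpt : ∀ ω, S ^ B ω * T ^ (1 - B ω) =
      {ω | B ω = 1}.indicator (fun _ => S) ω + {ω | B ω = 1}ᶜ.indicator (fun _ => T) ω := by
    intro ω
    rcases Nat.le_one_iff_eq_zero_or_eq_one.mp (hB1 ω) with h | h <;> simp [h]
  rw [lintegral_congr hpt, lintegral_add_left (measurable_const.indicator hs),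
    lintegral_indicator_const hs, lintegral_indicator_const hs.compl, prob_compl_eq_one_sub hs,
    mul_comm, mul_comm T]

lemma prod_disjSum_fin_two {M : Type*} [CommMonoid M] (F : Fin 2 ⊕ (ℕ ⊕ ℕ) → M)
    (s t : Finset ℕ) :
    ∏ i ∈ univ.disjSum (s.disjSum t), F i =
      F (.inl 0) * F (.inl 1) * ((∏ j ∈ s, F (.inr (.inl j))) * ∏ j ∈ t, F (.inr (.inr j))) := by
  simp [prod_disjSum, Fin.prod_univ_two]

lemma pow_sum_mul_pow_sum_one_sub (S T : ℝ≥0∞) (s : Finset ℕ) (B : ℕ → ℕ) :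
    S ^ (∑ j ∈ s, B j) * T ^ (∑ j ∈ s, (1 - B j)) = ∏ j ∈ s, S ^ B j * T ^ (1 - B j) := by
  rw [prod_mul_distrib, prod_pow_eq_pow_sum, prod_pow_eq_pow_sum]

lemma pow_add_mul_pow_add_eq_tsum (S T : ℝ≥0∞) (B₁ B₂ : ℕ → ℕ) (a b : ℕ) :
    S ^ (∑ j ∈ range a, B₁ j + ∑ j ∈ range b, B₂ j) *
        T ^ (∑ j ∈ range a, (1 - B₁ j) + ∑ j ∈ range b, (1 - B₂ j)) =
      ∑' mn : ℕ × ℕ, ({mn.1} : Set ℕ).indicator 1 a * ({mn.2} : Set ℕ).indicator 1 b *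
        ((∏ j ∈ range mn.1, S ^ B₁ j * T ^ (1 - B₁ j)) *
          ∏ j ∈ range mn.2, S ^ B₂ j * T ^ (1 - B₂ j)) := by
  rw [tsum_eq_single (a, b)]
  · simp only [Set.indicator_of_mem (Set.mem_singleton _), Pi.one_apply, one_mul,
      ← pow_sum_mul_pow_sum_one_sub, pow_add]
    ring
  · rintro ⟨m, n⟩ hmn
    have hne : a ≠ m ∨ b ≠ n := by
      by_contra! h
      exact hmn (by rw [h.1, h.2])
    rcases hne with h | h <;> simp [h]

lemma ProbabilityTheory.IndepFun.lintegral_pow_mul_pow {K₁ K₂ : Ω → ℕ} (h : IndepFun K₁ K₂ μ)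
    (hK₁ : Measurable K₁) (hK₂ : Measurable K₂) (S T : ℝ≥0∞) :
    ∫⁻ ω, S ^ K₁ ω * T ^ K₂ ω ∂μ =
      (∫⁻ ω, S ^ K₁ ω * 1 ^ K₂ ω ∂μ) * ∫⁻ ω, 1 ^ K₁ ω * T ^ K₂ ω ∂μ := by
  simp only [one_pow, mul_one, one_mul]
  exact lintegral_mul_eq_lintegral_mul_lintegral_of_indepFun (Measurable.of_discrete.comp hK₁)
    (Measurable.of_discrete.comp hK₂) (h.comp .of_discrete .of_discrete)

lemma toReal_tsum_measure_mul_ofReal_pow [IsFiniteMeasure μ] (N : Ω → ℕ) {z : ℝ} (hz : 0 ≤ z) :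
    (∑' m, μ {ω | N ω = m} * ENNReal.ofReal z ^ m).toReal =
      ofScalarsSum (fun k => μ.real {ω | N ω = k}) z := by
  rw [ENNReal.tsum_toReal_eq fun m => ENNReal.mul_ne_top (measure_ne_top μ _)
    (ENNReal.pow_ne_top ENNReal.ofReal_ne_top), ofScalarsSum_eq_tsum]
  simp [Measure.real, ENNReal.toReal_ofReal hz]

lemma ENNReal.ofReal_one_sub_mul_add_mul {r x y : ℝ} (hr0 : 0 ≤ r) (hr1 : r ≤ 1) (hx : 0 ≤ x)
    (hy : 0 ≤ y) :
    ENNReal.ofReal (1 - r) * ENNReal.ofReal x + (1 - ENNReal.ofReal (1 - r)) * ENNReal.ofReal y =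
      ENNReal.ofReal ((1 - r) * x + r * y) := by
  rw [← ENNReal.ofReal_one, ← ENNReal.ofReal_sub _ (by linarith), show 1 - (1 - r) = r by ring,
    ← ENNReal.ofReal_mul (by linarith), ← ENNReal.ofReal_mul hr0,
    ← ENNReal.ofReal_add (by nlinarith) (by nlinarith)]

variable {N₁ N₂ : Ω → ℕ} {B₁ B₂ : ℕ → Ω → ℕ}

theorem lintegral_pow_mul_pow_thinned [IsProbabilityMeasure μ]
    (hN₁ : Measurable N₁) (hN₂ : Measurable N₂)
    (hB₁ : ∀ j, Measurable (B₁ j)) (hB₂ : ∀ j, Measurable (B₂ j))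
    (hB₁1 : ∀ j ω, B₁ j ω ≤ 1) (hB₂1 : ∀ j ω, B₂ j ω ≤ 1) {r₁ r₂ : ℝ≥0∞}
    (hr₁ : ∀ j, μ {ω | B₁ j ω = 1} = r₁) (hr₂ : ∀ j, μ {ω | B₂ j ω = 1} = r₂)
    (hindep : iIndepFun (Sum.elim ![N₁, N₂] (Sum.elim B₁ B₂)) μ) (S T : ℝ≥0∞) :
    ∫⁻ ω, S ^ (∑ j ∈ range (N₁ ω), B₁ j ω + ∑ j ∈ range (N₂ ω), B₂ j ω) *
        T ^ (∑ j ∈ range (N₁ ω), (1 - B₁ j ω) + ∑ j ∈ range (N₂ ω), (1 - B₂ j ω)) ∂μ =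
      (∑' m, μ {ω | N₁ ω = m} * (r₁ * S + (1 - r₁) * T) ^ m) *
        ∑' n, μ {ω | N₂ ω = n} * (r₂ * S + (1 - r₂) * T) ^ n := by
  set W := Sum.elim ![N₁, N₂] (Sum.elim B₁ B₂)
  have hW : ∀ i, Measurable (W i) := by
    rintro ((i : Fin 2) | j | j)
    · fin_cases i
      exacts [hN₁, hN₂]
    exacts [hB₁ j, hB₂ j]
  -- on `{N₁ = m, N₂ = n}` the integrand is a product of functions of distinct coordinates of `W`
  let g : ℕ × ℕ → Fin 2 ⊕ (ℕ ⊕ ℕ) → ℕ → ℝ≥0∞ := fun mn =>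
    Sum.elim (fun i => ({![mn.1, mn.2] i} : Set ℕ).indicator 1) fun _ e => S ^ e * T ^ (1 - e)
  let idx : ℕ × ℕ → Finset (Fin 2 ⊕ (ℕ ⊕ ℕ)) := fun mn =>
    univ.disjSum ((range mn.1).disjSum (range mn.2))
  have hexpand : ∀ ω,
      S ^ (∑ j ∈ range (N₁ ω), B₁ j ω + ∑ j ∈ range (N₂ ω), B₂ j ω) *
        T ^ (∑ j ∈ range (N₁ ω), (1 - B₁ j ω) + ∑ j ∈ range (N₂ ω), (1 - B₂ j ω)) =
      ∑' mn, ∏ i ∈ idx mn, g mn i (W i ω) := fun ω => by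
    simpa only [idx, g, W, prod_disjSum_fin_two, Sum.elim_inl, Sum.elim_inr,
      Matrix.cons_val_zero, Matrix.cons_val_one] using
      pow_add_mul_pow_add_eq_tsum S T (B₁ · ω) (B₂ · ω) (N₁ ω) (N₂ ω)
  have hterm : ∀ mn : ℕ × ℕ, ∫⁻ ω, ∏ i ∈ idx mn, g mn i (W i ω) ∂μ =
      μ {ω | N₁ ω = mn.1} * (r₁ * S + (1 - r₁) * T) ^ mn.1 *
        (μ {ω | N₂ ω = mn.2} * (r₂ * S + (1 - r₂) * T) ^ mn.2) := by
    rintro ⟨m, n⟩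
    rw [lintegral_prod_eq_prod_lintegral_of_indepFun _ (fun i ω => g (m, n) i (W i ω))
      (hindep.comp _ fun _ => .of_discrete) fun i => Measurable.of_discrete.comp (hW i)]
    simp only [idx, g, W, prod_disjSum_fin_two, Sum.elim_inl, Sum.elim_inr,
        Matrix.cons_val_zero, Matrix.cons_val_one, lintegral_indicator_singleton_comp hN₁,
        lintegral_indicator_singleton_comp hN₂, lintegral_pow_mul_pow_one_sub (hB₁ _) (hB₁1 _),
        lintegral_pow_mul_pow_one_sub (hB₂ _) (hB₂1 _), hr₁, hr₂, prod_const, card_range]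
    ring
  rw [lintegral_congr hexpand, lintegral_tsum fun mn =>
    (Finset.measurable_prod (f := fun i ω => g mn i (W i ω)) _ fun i _ =>
      Measurable.of_discrete.comp (hW i)).aemeasurable, ENNReal.tsum_prod',
    ← ENNReal.tsum_mul_right]
  exact tsum_congr fun m => by
    rw [← ENNReal.tsum_mul_left]
    exact tsum_congr fun n => hterm (m, n)

theorem toReal_lintegral_pow_mul_pow_thinned [IsProbabilityMeasure μ]
    (hN₁ : Measurable N₁) (hN₂ : Measurable N₂)
    (hB₁ : ∀ j, Measurable (B₁ j)) (hB₂ : ∀ j, Measurable (B₂ j))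
    (hB₁1 : ∀ j ω, B₁ j ω ≤ 1) (hB₂1 : ∀ j ω, B₂ j ω ≤ 1) {p q : ℝ} (hp0 : 0 ≤ p) (hp1 : p ≤ 1)
    (hq0 : 0 ≤ q) (hq1 : q ≤ 1) (hr₁ : ∀ j, μ {ω | B₁ j ω = 1} = ENNReal.ofReal (1 - p))
    (hr₂ : ∀ j, μ {ω | B₂ j ω = 1} = ENNReal.ofReal (1 - q)) (hN : IdentDistrib N₁ N₂ μ μ)
    (hindep : iIndepFun (Sum.elim ![N₁, N₂] (Sum.elim B₁ B₂)) μ) {s t : ℝ} (hs : 0 ≤ s)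
    (ht : 0 ≤ t) :
    (∫⁻ ω, ENNReal.ofReal s ^ (∑ j ∈ range (N₁ ω), B₁ j ω + ∑ j ∈ range (N₂ ω), B₂ j ω) *
        ENNReal.ofReal t ^ (∑ j ∈ range (N₁ ω), (1 - B₁ j ω) + ∑ j ∈ range (N₂ ω), (1 - B₂ j ω))
          ∂μ).toReal =
      ofScalarsSum (fun k => μ.real {ω | N₁ ω = k}) ((1 - p) * s + p * t) *
        ofScalarsSum (fun k => μ.real {ω | N₁ ω = k}) ((1 - q) * s + q * t) := by
  have hN₂N₁ : ∀ n, μ {ω | N₂ ω = n} = μ {ω | N₁ ω = n} := fun n =>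
    (hN.measure_mem_eq (measurableSet_singleton n)).symm
  rw [lintegral_pow_mul_pow_thinned hN₁ hN₂ hB₁ hB₂ hB₁1 hB₂1 hr₁ hr₂ hindep, ENNReal.toReal_mul,
    ENNReal.ofReal_one_sub_mul_add_mul hp0 hp1 hs ht,
    ENNReal.ofReal_one_sub_mul_add_mul hq0 hq1 hs ht]
  simp only [hN₂N₁]
  rw [toReal_tsum_measure_mul_ofReal_pow _ (by nlinarith),
    toReal_tsum_measure_mul_ofReal_pow _ (by nlinarith)]

end Thinning

/-- If the linear forms `K₁ = X̃_{1-p} + Ỹ_{1-q}` and `K₂ = X̃_p + Ỹ_q` are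
independent, then `X` is Poisson distributed. -/
theorem indep_linear_forms_implies_poisson
    {Ω : Type*} [MeasurableSpace Ω] (μ : Measure Ω) [IsProbabilityMeasure μ]
    (p q : ℝ) (hp0 : 0 < p) (hp1 : p < 1) (hq0 : 0 < q) (hq1 : q < 1)
    (X Y : Ω → ℕ) (ε εt : ℕ → Ω → ℕ)
    (hXm : Measurable X) (hYm : Measurable Y)
    (hεm : ∀ j, Measurable (ε j)) (hεtm : ∀ j, Measurable (εt j))
    -- X and Y are identically distributed
    (hXY : IdentDistrib X Y μ μ)
    -- each ε_j is a Bernoulli random variable with parameter 1 - p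
    (hε01 : ∀ j ω, ε j ω ≤ 1)
    (hεP : ∀ j, μ {ω | ε j ω = 1} = ENNReal.ofReal (1 - p))
    -- each ε̃_j is a Bernoulli random variable with parameter 1 - q
    (hεt01 : ∀ j ω, εt j ω ≤ 1)
    (hεtP : ∀ j, μ {ω | εt j ω = 1} = ENNReal.ofReal (1 - q))
    -- X, Y, the ε_j's and the ε̃_j's are mutually independent
    (hindep : iIndepFun
      (fun i : ℕ => if i = 0 then X else if i = 1 then Y
        else if (i - 2) % 2 = 0 then ε ((i - 2) / 2) else εt ((i - 2) / 2)) μ)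
    -- the linear forms K₁ and K₂ are independent
    (hKindep : IndepFun
      (fun ω => (∑ j ∈ Finset.range (X ω), ε j ω) +
        ∑ j ∈ Finset.range (Y ω), εt j ω)
      (fun ω => (∑ j ∈ Finset.range (X ω), (1 - ε j ω)) +
        ∑ j ∈ Finset.range (Y ω), (1 - εt j ω)) μ) :
    ∃ l : ℝ, 0 ≤ l ∧ ∀ k : ℕ,
      μ {ω | X ω = k} = ENNReal.ofReal (Real.exp (-l) * l ^ k / k.factorial) := by
  have hjoint : ∀ {s t : ℝ}, 0 ≤ s → 0 ≤ t → _ := fun hs ht =>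
    toReal_lintegral_pow_mul_pow_thinned hXm hYm hεm hεtm hε01 hεt01 hp0.le hp1.le hq0.le hq1.le
      hεP hεtP hXY (iIndepFun_sumElim_of_interleaved hindep) hs ht
  have hK₁ := (measurable_sum_range_apply hXm hεm).add (measurable_sum_range_apply hYm hεtm)
  have hK₂ := (measurable_sum_range_apply hXm fun j => (hεm j).const_sub 1).add
    (measurable_sum_range_apply hYm fun j => (hεtm j).const_sub 1)
  obtain ⟨l, hl, hαl⟩ := poisson_of_pgf_functional_equation hp0 hp1 hq0.le hq1.le
    (fun k => measureReal_nonneg) (hasSum_measureReal_fiber hXm) fun s hs t ht => by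
      have hfactor := hKindep.lintegral_pow_mul_pow hK₁ hK₂ (ENNReal.ofReal s) (ENNReal.ofReal t)
      rw [← ENNReal.ofReal_one] at hfactor
      rw [← hjoint hs.1.le ht.1.le, hfactor, ENNReal.toReal_mul, hjoint hs.1.le zero_le_one,
        hjoint zero_le_one ht.1.le]
  exact ⟨l, hl, fun k => by rw [← hαl, ofReal_measureReal]⟩
end

section
/- The linear forms K₁ = X̃_{1-p} + Ỹ_{1-q} and K₂ = X̃_p + Ỹ_q are stochastically independent if and only if X is Poisson distributed, i.e. there exists λ ≥ 0 with P(X = k) = e^{-λ} λ^k / k! for all k ∈ ℕ. -/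
/-!
Write `b k = P(X = k)`. Given `X`, the pair `(X̃_{1-p}, X̃_p)` splits `X` binomially, so its law is
`b (i + j) * C(i + j, i) * (1 - p) ^ i * p ^ j`; as `(X, ε)` is independent of `(Y, ε̃)`, the law
`J m n` of `(K₁, K₂)` is a convolution of two such laws. For Poisson `b` both coordinates of a
thinned pair are independent Poisson variables, so `J` factors.

Conversely, independence gives `J k 1 * J 0 0 = J k 0 * J 0 1`, which expands to
`b 0 * ∑_{i + j = k} (1 - p) ^ i (1 - q) ^ j (q b_i d_j + p b_j d_i) = 0` with
`d k = (k + 1) b (k + 1) b 0 - b 1 b k`. As `d 0 = 0`, induction on `k` kills every term except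
those at `(0, k)` and `(k, 0)`, so `d k = 0`: the Poisson recurrence with `λ = b 1 / b 0`.
-/

open MeasureTheory ProbabilityTheory

open Finset Real

namespace MeasureTheory

variable {Ω β : Type*} {mΩ : MeasurableSpace Ω} {μ : Measure Ω} {mβ : MeasurableSpace β}

lemma measurable_iSup_comap {ι : Type*} {f : ι → Ω → β} {S : Set ι} {i : ι} (hi : i ∈ S) :
    Measurable[⨆ i ∈ S, mβ.comap (f i)] (f i) :=
  (comap_measurable (f i)).mono (le_biSup (fun i => mβ.comap (f i)) hi) le_rfl

lemma measurable_sum_range {m : MeasurableSpace Ω} {N : Ω → ℕ} {v : ℕ → Ω → ℕ}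
    (hN : Measurable[m] N) (hv : ∀ t, Measurable[m] (v t)) :
    Measurable[m] fun ω => ∑ t ∈ range (N ω), v t ω :=
  (measurable_from_prod_countable_left (f := fun x : Ω × ℕ => ∑ t ∈ range x.2, v t x.1)
    fun n => Finset.measurable_sum (range n) fun t _ => hv t).comp (measurable_id.prodMk hN)

variable [MeasurableSingletonClass β] [Countable β]

lemma measure_eq_tsum_inter_setOf_eq {g : Ω → β} (hg : Measurable g) (s : Set Ω) :
    μ s = ∑' b, μ (s ∩ {ω | g ω = b}) := by
  have := measure_iUnion (μ := μ.restrict s) (f := fun b => {ω | g ω = b})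
    (fun b b' hbb' => Set.disjoint_left.2 fun ω h h' => hbb' (h.symm.trans h'))
    (fun b => hg (measurableSet_singleton b))
  rw [show (⋃ b, {ω | g ω = b}) = Set.univ by ext ω; simp, Measure.restrict_apply_univ] at this
  rw [this]
  exact tsum_congr fun b => by
    rw [Measure.restrict_apply (t := {ω | g ω = b}) (hg (measurableSet_singleton b)),
      Set.inter_comm]

lemma hasSum_measureReal_setOf_eq [IsProbabilityMeasure μ] {g : Ω → β} (hg : Measurable g) :
    HasSum (fun b => μ.real {ω | g ω = b}) 1 := by
  have htotal := measure_eq_tsum_inter_setOf_eq (μ := μ) hg Set.univ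
  simp only [Set.univ_inter, measure_univ] at htotal
  have := ENNReal.hasSum_toReal (htotal ▸ ENNReal.one_ne_top)
  rwa [← ENNReal.tsum_toReal_eq fun b => measure_ne_top μ _, ← htotal, ENNReal.toReal_one] at this

end MeasureTheory

namespace ProbabilityTheory

variable {Ω : Type*} {mΩ : MeasurableSpace Ω} {μ : Measure Ω}

lemma Indep.measureReal_inter_eq_mul {m₁ m₂ : MeasurableSpace Ω} (h : Indep m₁ m₂ μ)
    {s t : Set Ω} (hs : MeasurableSet[m₁] s) (ht : MeasurableSet[m₂] t) :
    μ.real (s ∩ t) = μ.real s * μ.real t := by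
  rw [measureReal_def, (Indep_iff _ _ _).1 h s t hs ht, ENNReal.toReal_mul]
  rfl

lemma iIndepFun.indep_of_le_biSup {ι β : Type*} {mβ : MeasurableSpace β} {f : ι → Ω → β}
    (h : iIndepFun f μ) (hf : ∀ i, Measurable (f i)) {S T : Set ι} (hST : Disjoint S T)
    {m₁ m₂ : MeasurableSpace Ω} (h₁ : m₁ ≤ ⨆ i ∈ S, mβ.comap (f i))
    (h₂ : m₂ ≤ ⨆ i ∈ T, mβ.comap (f i)) :
    Indep m₁ m₂ μ :=
  indep_of_indep_of_le_right (indep_of_indep_of_le_left (indep_iSup_of_disjoint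
    (fun i => (hf i).comap_le) ((iIndepFun_iff_iIndep _ _ _).1 h) hST) h₁) h₂

lemma iIndepFun.indep_comap_iSup_comap {ι β : Type*} {mβ : MeasurableSpace β}
    {f : ι → Ω → β} (h : iIndepFun f μ) (hf : ∀ i, Measurable (f i)) {i₀ : ι} {e : ℕ → ι}
    (he : ∀ j, e j ≠ i₀) :
    Indep (mβ.comap (f i₀)) (⨆ j, mβ.comap (f (e j))) μ :=
  h.indep_of_le_biSup hf (S := {i₀}) (T := {i₀}ᶜ) (by simp)
    (le_biSup (fun i => mβ.comap (f i)) rfl)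
    (iSup_le fun j => le_biSup (fun i => mβ.comap (f i)) (he j))

section Discrete

variable {α β : Type*} [MeasurableSpace α] [MeasurableSingletonClass α] [Countable α]
  [MeasurableSpace β] [MeasurableSingletonClass β] [Countable β]

lemma indepFun_iff_measure_inter_eq_mul [IsFiniteMeasure μ] {f : Ω → α} {g : Ω → β}
    (hf : Measurable f) (hg : Measurable g) :
    IndepFun f g μ ↔
      ∀ a b, μ {ω | f ω = a ∧ g ω = b} = μ {ω | f ω = a} * μ {ω | g ω = b} := by
  rw [indepFun_iff_map_prod_eq_prod_map_map hf.aemeasurable hg.aemeasurable,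
    Measure.ext_iff_singleton, Prod.forall]
  refine forall₂_congr fun a b => ?_
  rw [← Set.singleton_prod_singleton, Measure.prod_prod,
    Measure.map_apply (hf.prodMk hg) ((measurableSet_singleton a).prod (measurableSet_singleton b)),
    Measure.map_apply hf (measurableSet_singleton a),
    Measure.map_apply hg (measurableSet_singleton b)]
  rfl

lemma indepFun_of_measure_eq_mul [IsProbabilityMeasure μ] {f : Ω → α} {g : Ω → β}
    (hf : Measurable f) (hg : Measurable g) (u : α → ENNReal) (v : β → ENNReal)
    (h : ∀ a b, μ {ω | f ω = a ∧ g ω = b} = u a * v b) : IndepFun f g μ := by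
  have hf_marg : ∀ a, μ {ω | f ω = a} = u a * ∑' b, v b := fun a => by
    rw [measure_eq_tsum_inter_setOf_eq hg, ← ENNReal.tsum_mul_left]
    exact tsum_congr (h a)
  have hg_marg : ∀ b, μ {ω | g ω = b} = (∑' a, u a) * v b := fun b => by
    rw [measure_eq_tsum_inter_setOf_eq hf, ← ENNReal.tsum_mul_right]
    exact tsum_congr fun a => by rw [Set.inter_comm, ← h]; rfl
  have htotal : (∑' a, u a) * ∑' b, v b = 1 := by
    rw [← ENNReal.tsum_mul_right, ← measure_univ (μ := μ), measure_eq_tsum_inter_setOf_eq hf]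
    exact tsum_congr fun a => by rw [Set.univ_inter, hf_marg]
  refine (indepFun_iff_measure_inter_eq_mul hf hg).2 fun a b => ?_
  rw [h, hf_marg, hg_marg]
  calc u a * v b = u a * v b * ((∑' a, u a) * ∑' b, v b) := by rw [htotal, mul_one]
    _ = _ := by ring

end Discrete

end ProbabilityTheory

namespace PoissonThinning

/-- Law of `(∑_{t<X} ε_t, ∑_{t<X} (1 - ε_t))` when `X` has law `b` and `P(ε_t = 1) = 1 - c`. -/
noncomputable def thinnedPMF (c : ℝ) (b : ℕ → ℝ) (i j : ℕ) : ℝ :=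
  b (i + j) * (i + j).choose i * (1 - c) ^ i * c ^ j

noncomputable def linearFormsPMF (p q : ℝ) (b : ℕ → ℝ) (m n : ℕ) : ℝ :=
  ∑ x ∈ antidiagonal m, ∑ y ∈ antidiagonal n, thinnedPMF p b x.1 y.1 * thinnedPMF q b x.2 y.2

def poissonDefect (b : ℕ → ℝ) (k : ℕ) : ℝ := (k + 1) * b (k + 1) * b 0 - b 1 * b k

section Algebra

variable {p q : ℝ} {b : ℕ → ℝ}

lemma thinnedPMF_zero_right (c : ℝ) (b : ℕ → ℝ) (i : ℕ) :
    thinnedPMF c b i 0 = b i * (1 - c) ^ i := by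
  simp [thinnedPMF]

lemma thinnedPMF_one_right (c : ℝ) (b : ℕ → ℝ) (i : ℕ) :
    thinnedPMF c b i 1 = (i + 1) * b (i + 1) * (1 - c) ^ i * c := by
  rw [thinnedPMF, Nat.choose_succ_self_right]
  push_cast
  ring

lemma linearFormsPMF_rank_defect (p q : ℝ) (b : ℕ → ℝ) (k : ℕ) :
    linearFormsPMF p q b k 1 * linearFormsPMF p q b 0 0
        - linearFormsPMF p q b k 0 * linearFormsPMF p q b 0 1 =
      b 0 * ∑ x ∈ antidiagonal k, (1 - p) ^ x.1 * (1 - q) ^ x.2 *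
        (q * b x.1 * poissonDefect b x.2 + p * b x.2 * poissonDefect b x.1) := by
  simp only [linearFormsPMF, Nat.antidiagonal_zero, sum_singleton, Nat.sum_antidiagonal_succ,
    zero_add, thinnedPMF_zero_right, thinnedPMF_one_right, sum_mul, mul_sum, ← sum_sub_distrib]
  refine sum_congr rfl fun x _ => ?_
  simp only [poissonDefect]
  push_cast
  ring

lemma poissonDefect_eq_zero (hp0 : 0 < p) (hp1 : p < 1) (hq0 : 0 < q) (hq1 : q < 1)
    (hb0 : b 0 ≠ 0)
    (hrank : ∀ k, linearFormsPMF p q b k 1 * linearFormsPMF p q b 0 0 =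
      linearFormsPMF p q b k 0 * linearFormsPMF p q b 0 1) (k : ℕ) :
    poissonDefect b k = 0 := by
  induction k using Nat.strong_induction_on with
  | _ k ih =>
  have key := linearFormsPMF_rank_defect p q b k
  simp only [hrank k, sub_self, mul_add, sum_add_distrib] at key
  rw [sum_eq_single_of_mem (0, k) (by simp) ?_, sum_eq_single_of_mem (k, 0) (by simp) ?_] at key
  · have hcoef : 0 < (1 - q) ^ k * q + (1 - p) ^ k * p := by
      have := sub_pos.2 hp1; have := sub_pos.2 hq1; positivity
    have : b 0 * b 0 * ((1 - q) ^ k * q + (1 - p) ^ k * p) * poissonDefect b k = 0 := by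
      linear_combination -key
    simpa [hb0, hcoef.ne'] using this
  all_goals
    intro x hx hne
    rw [HasAntidiagonal.mem_antidiagonal] at hx
    rw [ih _ (by grind), mul_zero, mul_zero]

lemma hasSum_pow_div_factorial (x : ℝ) : HasSum (fun n => x ^ n / n.factorial) (exp x) :=
  Real.exp_eq_exp_ℝ ▸ NormedSpace.expSeries_div_hasSum_exp x

lemma exists_poisson_of_poissonDefect_eq_zero (hb : ∀ k, 0 ≤ b k) (hb0 : b 0 ≠ 0)
    (hd : ∀ k, poissonDefect b k = 0) (hsum : HasSum b 1) :
    ∃ l : ℝ, 0 ≤ l ∧ ∀ k : ℕ, b k = exp (-l) * l ^ k / k.factorial := by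
  obtain ⟨l, hl, hb1⟩ : ∃ l, 0 ≤ l ∧ b 1 = l * b 0 :=
    ⟨b 1 / b 0, div_nonneg (hb 1) (hb 0), (div_mul_cancel₀ _ hb0).symm⟩
  have hform' : ∀ k : ℕ, b k * k.factorial = b 0 * l ^ k := by
    intro k
    induction k with
    | zero => simp
    | succ k ih =>
      have hdk := hd k
      rw [poissonDefect] at hdk
      have hk : b 0 * (b (k + 1) * (k + 1) * k.factorial - b 0 * l ^ (k + 1)) = 0 := by
        linear_combination (k.factorial : ℝ) * hdk + k.factorial * b k * hb1 + l * b 0 * ih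
      rw [Nat.factorial_succ, Nat.cast_mul, Nat.cast_succ]
      linear_combination (mul_eq_zero.1 hk).resolve_left hb0
  have hform : ∀ k : ℕ, b k = b 0 * (l ^ k / k.factorial) := fun k => by
    rw [mul_div_assoc', eq_div_iff (by positivity), hform' k]
  have hb0_exp : b 0 * exp l = 1 :=
    ((hasSum_pow_div_factorial l).mul_left (b 0)).unique (by simpa only [← hform] using hsum)
  refine ⟨l, hl, fun k => ?_⟩
  rw [hform k, exp_neg, ← eq_inv_of_mul_eq_one_left hb0_exp]
  ring

lemma thinnedPMF_nonneg {c : ℝ} (hc0 : 0 ≤ c) (hc1 : c ≤ 1) (hb : ∀ k, 0 ≤ b k) (i j : ℕ) :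
    0 ≤ thinnedPMF c b i j := by
  have := sub_nonneg.2 hc1
  have := hb (i + j)
  unfold thinnedPMF
  positivity

lemma thinnedPMF_mul_le_linearFormsPMF (hp0 : 0 ≤ p) (hp1 : p ≤ 1) (hq0 : 0 ≤ q) (hq1 : q ≤ 1)
    (hb : ∀ k, 0 ≤ b k) {m n : ℕ} {x y : ℕ × ℕ} (hx : x ∈ antidiagonal m)
    (hy : y ∈ antidiagonal n) :
    thinnedPMF p b x.1 y.1 * thinnedPMF q b x.2 y.2 ≤ linearFormsPMF p q b m n := by
  have hnonneg : ∀ x y : ℕ × ℕ, 0 ≤ thinnedPMF p b x.1 y.1 * thinnedPMF q b x.2 y.2 :=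
    fun x y => mul_nonneg (thinnedPMF_nonneg hp0 hp1 hb _ _) (thinnedPMF_nonneg hq0 hq1 hb _ _)
  calc _ ≤ ∑ y ∈ antidiagonal n, thinnedPMF p b x.1 y.1 * thinnedPMF q b x.2 y.2 :=
        single_le_sum (fun y _ => hnonneg x y) hy
    _ ≤ linearFormsPMF p q b m n :=
        single_le_sum (f := fun x => ∑ y ∈ antidiagonal n, _)
          (fun x _ => sum_nonneg fun y _ => hnonneg x y) hx

lemma linearFormsPMF_zero_zero (p q : ℝ) (b : ℕ → ℝ) : linearFormsPMF p q b 0 0 = b 0 * b 0 := by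
  simp [linearFormsPMF, thinnedPMF]

theorem exists_poisson_of_linearFormsPMF_eq_mul (hp0 : 0 < p) (hp1 : p < 1) (hq0 : 0 < q)
    (hq1 : q < 1) (hb : ∀ k, 0 ≤ b k) (hsum : HasSum b 1) {u v : ℕ → ℝ}
    (huv : ∀ m n, linearFormsPMF p q b m n = u m * v n) :
    ∃ l : ℝ, 0 ≤ l ∧ ∀ k : ℕ, b k = exp (-l) * l ^ k / k.factorial := by
  obtain ⟨k, hk⟩ : ∃ k, b k ≠ 0 := by
    by_contra! h
    rw [funext h] at hsum
    exact one_ne_zero (hsum.unique hasSum_zero)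
  have hbk : 0 < b k := (hb k).lt_of_ne' hk
  have h1p := sub_pos.2 hp1
  have h1q := sub_pos.2 hq1
  have hJ₁ : 0 < linearFormsPMF p q b 0 (k + k) :=
    lt_of_lt_of_le (by simp only [thinnedPMF, zero_add, Nat.choose_zero_right]; positivity)
      (thinnedPMF_mul_le_linearFormsPMF hp0.le hp1.le hq0.le hq1.le hb
        (x := (0, 0)) (y := (k, k)) (by simp) (by simp))
  have hJ₂ : 0 < linearFormsPMF p q b (k + k) 0 :=
    lt_of_lt_of_le (by simp only [thinnedPMF, add_zero, Nat.choose_self]; positivity)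
      (thinnedPMF_mul_le_linearFormsPMF hp0.le hp1.le hq0.le hq1.le hb
        (x := (k, k)) (y := (0, 0)) (by simp) (by simp))
  -- `b 0 ^ 2 = u 0 * v 0`, and `u 0`, `v 0` are nonzero since `J 0 (2k)`, `J (2k) 0` are positive.
  have hb0 : b 0 ≠ 0 := by
    have h00 := huv 0 0
    rw [huv] at hJ₁ hJ₂
    rw [linearFormsPMF_zero_zero] at h00
    exact left_ne_zero_of_mul
      (h00 ▸ mul_ne_zero (left_ne_zero_of_mul hJ₁.ne') (right_ne_zero_of_mul hJ₂.ne'))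
  refine exists_poisson_of_poissonDefect_eq_zero hb hb0
    (poissonDefect_eq_zero hp0 hp1 hq0 hq1 hb0 fun k => ?_) hsum
  rw [huv, huv, huv, huv]
  ring

lemma sum_antidiagonal_pow_div_factorial (a c : ℝ) (n : ℕ) :
    ∑ x ∈ antidiagonal n, a ^ x.1 / x.1.factorial * (c ^ x.2 / x.2.factorial) =
      (a + c) ^ n / n.factorial := by
  rw [(Commute.all a c).add_pow', sum_div]
  refine sum_congr rfl fun x hx => ?_
  rw [HasAntidiagonal.mem_antidiagonal] at hx
  subst hx
  rw [nsmul_eq_mul, Nat.cast_add_choose]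
  field_simp

lemma thinnedPMF_poisson (l c : ℝ) (i j : ℕ) :
    thinnedPMF c (fun k => exp (-l) * l ^ k / k.factorial) i j =
      exp (-l) * ((l * (1 - c)) ^ i / i.factorial * ((l * c) ^ j / j.factorial)) := by
  rw [thinnedPMF, Nat.cast_add_choose, mul_pow, mul_pow, pow_add]
  field_simp

lemma linearFormsPMF_poisson (p q l : ℝ) (m n : ℕ) :
    linearFormsPMF p q (fun k => exp (-l) * l ^ k / k.factorial) m n =
      exp (-l) * ((l * (1 - p) + l * (1 - q)) ^ m / m.factorial) *
        (exp (-l) * ((l * p + l * q) ^ n / n.factorial)) := by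
  rw [← sum_antidiagonal_pow_div_factorial, ← sum_antidiagonal_pow_div_factorial, mul_sum,
    mul_sum, sum_mul_sum]
  simp only [linearFormsPMF, thinnedPMF_poisson]
  refine sum_congr rfl fun x _ => sum_congr rfl fun y _ => ?_
  ring

end Algebra

section Probability

variable {Ω : Type*} {mΩ : MeasurableSpace Ω} {μ : Measure Ω}

lemma sum_range_add_sum_range_one_sub {v : ℕ → ℕ} (hv : ∀ t, v t ≤ 1) (n : ℕ) :
    ∑ t ∈ range n, v t + ∑ t ∈ range n, (1 - v t) = n := by
  rw [← sum_add_distrib, sum_congr rfl fun t _ => Nat.add_sub_of_le (hv t)]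
  simp

lemma measureReal_add_add_eq_sum [IsFiniteMeasure μ] {A B C D : Ω → ℕ} (hA : Measurable A)
    (hB : Measurable B) (hC : Measurable C) (hD : Measurable D) (m n : ℕ) :
    μ.real {ω | A ω + C ω = m ∧ B ω + D ω = n} =
      ∑ x ∈ antidiagonal m, ∑ y ∈ antidiagonal n,
        μ.real ({ω | A ω = x.1 ∧ B ω = y.1} ∩ {ω | C ω = x.2 ∧ D ω = y.2}) := by
  rw [← sum_product', ← measureReal_biUnion_finset]
  · congr 1
    ext ω
    simp only [Set.mem_ofPred_eq, Set.mem_iUnion, Set.mem_inter_iff, mem_product,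
      HasAntidiagonal.mem_antidiagonal, exists_prop, Prod.exists]
    constructor
    · rintro ⟨rfl, rfl⟩
      exact ⟨A ω, C ω, B ω, D ω, ⟨rfl, rfl⟩, ⟨rfl, rfl⟩, rfl, rfl⟩
    · rintro ⟨_, _, _, _, ⟨rfl, rfl⟩, ⟨h1, h2⟩, h3, h4⟩
      simp_all
  · intro x _ y _ hxy
    refine Set.disjoint_left.2 fun ω hx hy => hxy ?_
    simp only [Set.mem_inter_iff, Set.mem_ofPred_eq] at hx hy
    ext <;> simp only [← hx.1.1, ← hx.1.2, ← hx.2.1, ← hx.2.2, hy.1.1, hy.1.2, hy.2.1, hy.2.2]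
  · intro x _
    exact ((hA (measurableSet_singleton _)).inter (hB (measurableSet_singleton _))).inter
      ((hC (measurableSet_singleton _)).inter (hD (measurableSet_singleton _)))

variable [IsProbabilityMeasure μ]

lemma measureReal_setOf_eq_zero_of_le_one {e : Ω → ℕ} (he : Measurable e) (h01 : ∀ ω, e ω ≤ 1)
    {c : ℝ} (hc : μ.real {ω | e ω = 1} = 1 - c) : μ.real {ω | e ω = 0} = c := by
  have : {ω | e ω = 0} = {ω | e ω = 1}ᶜ := by
    ext ω
    have := h01 ω
    simp only [Set.mem_ofPred_eq, Set.mem_compl_iff]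
    omega
  rw [this, measureReal_compl (s := {ω | e ω = 1}) (he (measurableSet_singleton 1)), hc,
    probReal_univ]
  ring

lemma choose_mul_pow_pascal (c : ℝ) (n i : ℕ) :
    n.choose (i + 1) * (1 - c) ^ (i + 1) * c ^ (n - (i + 1)) * c +
        n.choose i * (1 - c) ^ i * c ^ (n - i) * (1 - c) =
      (n + 1).choose (i + 1) * (1 - c) ^ (i + 1) * c ^ (n + 1 - (i + 1)) := by
  rw [Nat.choose_succ_succ n i, Nat.add_sub_add_right]
  rcases lt_or_ge i n with hin | hin
  · obtain ⟨d, rfl⟩ := Nat.exists_eq_add_of_lt hin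
    rw [show i + d + 1 - (i + 1) = d by omega, show i + d + 1 - i = d + 1 by omega]
    push_cast
    ring
  · rw [Nat.choose_eq_zero_of_lt (by omega : n < i + 1)]
    push_cast
    ring

lemma measureReal_sum_range_eq {ε : ℕ → Ω → ℕ} (hε : ∀ j, Measurable (ε j))
    (hind : iIndepFun ε μ) (h01 : ∀ j ω, ε j ω ≤ 1) {c : ℝ}
    (hc : ∀ j, μ.real {ω | ε j ω = 1} = 1 - c) (n i : ℕ) :
    μ.real {ω | ∑ j ∈ range n, ε j ω = i} = n.choose i * (1 - c) ^ i * c ^ (n - i) := by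
  induction n generalizing i with
  | zero => cases i <;> simp
  | succ n ih =>
    have hsplit : ∀ k e, μ.real ({ω | ∑ j ∈ range n, ε j ω = k} ∩ {ω | ε n ω = e}) =
        μ.real {ω | ∑ j ∈ range n, ε j ω = k} * μ.real {ω | ε n ω = e} := by
      intro k e
      refine (hind.indep_of_le_biSup hε (S := Set.Iio n) (T := {n}) (by simp)
        le_rfl le_rfl).measureReal_inter_eq_mul ?_ ?_
      · exact (Finset.measurable_sum _ fun j hj => measurable_iSup_comap (by simpa using hj))
          (measurableSet_singleton k)
      · exact measurable_iSup_comap (f := ε) (Set.mem_singleton n) (measurableSet_singleton e)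
    have h0 := measureReal_setOf_eq_zero_of_le_one (hε n) (h01 n) (hc n)
    cases i with
    | zero =>
      have : {ω | ∑ j ∈ range (n + 1), ε j ω = 0} =
          {ω | ∑ j ∈ range n, ε j ω = 0} ∩ {ω | ε n ω = 0} := by
        ext ω; simp [sum_range_succ]
      rw [this, hsplit, ih, h0]
      simp [pow_succ]
    | succ i =>
      have : {ω | ∑ j ∈ range (n + 1), ε j ω = i + 1} =
          ({ω | ∑ j ∈ range n, ε j ω = i + 1} ∩ {ω | ε n ω = 0}) ∪
            ({ω | ∑ j ∈ range n, ε j ω = i} ∩ {ω | ε n ω = 1}) := by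
        ext ω
        have := h01 n ω
        simp only [sum_range_succ, Set.mem_ofPred_eq, Set.mem_union, Set.mem_inter_iff]
        omega
      rw [this, measureReal_union, hsplit, hsplit, ih, ih, h0, hc]
      · exact choose_mul_pow_pascal c n i
      · exact Set.disjoint_left.2 fun ω h h' => by simp_all
      · exact (measurable_sum _ fun j _ => hε j) (measurableSet_singleton i) |>.inter
          (hε n (measurableSet_singleton 1))

lemma measureReal_thinned_eq {X : Ω → ℕ} {ε : ℕ → Ω → ℕ} (hε : ∀ j, Measurable (ε j))
    (hXε : Indep (MeasurableSpace.comap X inferInstance)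
      (⨆ j, MeasurableSpace.comap (ε j) inferInstance) μ)
    (hind : iIndepFun ε μ) (h01 : ∀ j ω, ε j ω ≤ 1) {c : ℝ}
    (hc : ∀ j, μ.real {ω | ε j ω = 1} = 1 - c) (i j : ℕ) :
    μ.real {ω | ∑ t ∈ range (X ω), ε t ω = i ∧ ∑ t ∈ range (X ω), (1 - ε t ω) = j} =
      thinnedPMF c (fun k => μ.real {ω | X ω = k}) i j := by
  have hset : {ω | ∑ t ∈ range (X ω), ε t ω = i ∧ ∑ t ∈ range (X ω), (1 - ε t ω) = j} =
      {ω | X ω = i + j} ∩ {ω | ∑ t ∈ range (i + j), ε t ω = i} := by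
    ext ω
    have := sum_range_add_sum_range_one_sub (fun t => h01 t ω) (X ω)
    simp only [Set.mem_ofPred_eq, Set.mem_inter_iff]
    constructor
    · rintro ⟨hi, hj⟩
      have hXω : X ω = i + j := by omega
      rw [hXω] at hi
      exact ⟨hXω, hi⟩
    · rintro ⟨hX, hi⟩
      rw [hX] at this ⊢
      omega
  rw [hset, hXε.measureReal_inter_eq_mul (s := {ω | X ω = i + j})
    (t := {ω | ∑ t ∈ range (i + j), ε t ω = i}) ⟨{i + j}, measurableSet_singleton _, rfl⟩
    ((measurable_sum _ fun t _ => (comap_measurable (ε t)).mono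
      (le_iSup (fun j => MeasurableSpace.comap (ε j) inferInstance) t) le_rfl)
      (measurableSet_singleton i)),
    measureReal_sum_range_eq hε hind h01 hc, Nat.add_sub_cancel_left, thinnedPMF]
  ring

end Probability

section Interleave

variable {Ω : Type*} {X Y : Ω → ℕ} {ε εt : ℕ → Ω → ℕ}

/-- The family of the independence hypothesis of `indep_linear_forms_iff_poisson`. -/
def interleave (X Y : Ω → ℕ) (ε εt : ℕ → Ω → ℕ) (i : ℕ) : Ω → ℕ :=
  if i = 0 then X else if i = 1 then Y
    else if (i - 2) % 2 = 0 then ε ((i - 2) / 2) else εt ((i - 2) / 2)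

lemma interleave_zero : interleave X Y ε εt 0 = X := rfl

lemma interleave_one : interleave X Y ε εt 1 = Y := rfl

lemma interleave_two_mul_add_two (j : ℕ) : interleave X Y ε εt (2 * j + 2) = ε j := by
  simp [interleave]

lemma interleave_two_mul_add_three (j : ℕ) : interleave X Y ε εt (2 * j + 3) = εt j := by
  rw [interleave, if_neg (by omega), if_neg (by omega), if_neg (by omega),
    show (2 * j + 3 - 2) / 2 = j by omega]

variable {mΩ : MeasurableSpace Ω} {μ : Measure Ω}

lemma measurable_interleave (hX : Measurable X) (hY : Measurable Y) (hε : ∀ j, Measurable (ε j))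
    (hεt : ∀ j, Measurable (εt j)) (i : ℕ) : Measurable (interleave X Y ε εt i) := by
  unfold interleave
  split_ifs
  exacts [hX, hY, hε _, hεt _]

lemma iIndepFun_of_interleave_left (h : iIndepFun (interleave X Y ε εt) μ) : iIndepFun ε μ := by
  have := h.precomp (g := fun j => 2 * j + 2) fun a b hab => by simp only at hab; omega
  simpa only [interleave_two_mul_add_two] using this

lemma iIndepFun_of_interleave_right (h : iIndepFun (interleave X Y ε εt) μ) :
    iIndepFun εt μ := by
  have := h.precomp (g := fun j => 2 * j + 3) fun a b hab => by simp only at hab; omega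
  simpa only [interleave_two_mul_add_three] using this

lemma indep_of_interleave_left (hX : Measurable X) (hY : Measurable Y)
    (hε : ∀ j, Measurable (ε j)) (hεt : ∀ j, Measurable (εt j))
    (h : iIndepFun (interleave X Y ε εt) μ) :
    Indep (MeasurableSpace.comap X inferInstance)
      (⨆ j, MeasurableSpace.comap (ε j) inferInstance) μ := by
  have := h.indep_comap_iSup_comap (measurable_interleave hX hY hε hεt) (i₀ := 0)
    (e := fun j => 2 * j + 2) fun j => by omega
  simpa only [interleave_zero, interleave_two_mul_add_two] using this

lemma indep_of_interleave_right (hX : Measurable X) (hY : Measurable Y)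
    (hε : ∀ j, Measurable (ε j)) (hεt : ∀ j, Measurable (εt j))
    (h : iIndepFun (interleave X Y ε εt) μ) :
    Indep (MeasurableSpace.comap Y inferInstance)
      (⨆ j, MeasurableSpace.comap (εt j) inferInstance) μ := by
  have := h.indep_comap_iSup_comap (measurable_interleave hX hY hε hεt) (i₀ := 1)
    (e := fun j => 2 * j + 3) fun j => by omega
  simpa only [interleave_one, interleave_two_mul_add_three] using this

lemma indep_of_interleave (hX : Measurable X) (hY : Measurable Y)
    (hε : ∀ j, Measurable (ε j)) (hεt : ∀ j, Measurable (εt j))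
    (h : iIndepFun (interleave X Y ε εt) μ) :
    Indep (MeasurableSpace.comap X inferInstance ⊔
        ⨆ j, MeasurableSpace.comap (ε j) inferInstance)
      (MeasurableSpace.comap Y inferInstance ⊔
        ⨆ j, MeasurableSpace.comap (εt j) inferInstance) μ := by
  refine h.indep_of_le_biSup (measurable_interleave hX hY hε hεt) (S := {i | Even i})
    (T := {i | Odd i}) (Set.disjoint_left.2 fun i hi hi' => Nat.not_even_iff_odd.2 hi' hi)
    (sup_le ?_ (iSup_le fun j => ?_)) (sup_le ?_ (iSup_le fun j => ?_))
  · exact le_biSup (s := {i | Even i})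
      (fun i => MeasurableSpace.comap (interleave X Y ε εt i) inferInstance) ⟨0, rfl⟩
  · rw [← interleave_two_mul_add_two (X := X) (Y := Y) (ε := ε) (εt := εt) j]
    exact le_biSup (s := {i | Even i})
      (fun i => MeasurableSpace.comap (interleave X Y ε εt i) inferInstance) ⟨j + 1, by ring⟩
  · exact le_biSup (s := {i | Odd i})
      (fun i => MeasurableSpace.comap (interleave X Y ε εt i) inferInstance) odd_one
  · rw [← interleave_two_mul_add_three (X := X) (Y := Y) (ε := ε) (εt := εt) j]
    exact le_biSup (s := {i | Odd i})
      (fun i => MeasurableSpace.comap (interleave X Y ε εt i) inferInstance) ⟨j + 1, by ring⟩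

end Interleave

section LinearForms

variable {Ω : Type*} {mΩ : MeasurableSpace Ω} {μ : Measure Ω}

lemma measurableSet_thinned (X : Ω → ℕ) (ε : ℕ → Ω → ℕ) (i j : ℕ) :
    MeasurableSet[MeasurableSpace.comap X inferInstance ⊔
        ⨆ j, MeasurableSpace.comap (ε j) inferInstance]
      {ω | ∑ t ∈ range (X ω), ε t ω = i ∧ ∑ t ∈ range (X ω), (1 - ε t ω) = j} := by
  set m : MeasurableSpace Ω := MeasurableSpace.comap X inferInstance ⊔
    ⨆ j, MeasurableSpace.comap (ε j) inferInstance
  have hX : Measurable[m] X := (comap_measurable X).mono le_sup_left le_rfl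
  have hε : ∀ t, Measurable[m] (ε t) := fun t => (comap_measurable (ε t)).mono
    (le_sup_of_le_right (le_iSup (fun j => MeasurableSpace.comap (ε j) inferInstance) t)) le_rfl
  exact (measurable_sum_range hX hε (measurableSet_singleton i)).inter
    (measurable_sum_range hX (fun t => Measurable.of_discrete.comp (hε t))
      (measurableSet_singleton j))

lemma measurable_sum_range_add {X Y : Ω → ℕ} {ε εt : ℕ → Ω → ℕ} (hX : Measurable X)
    (hY : Measurable Y) (hε : ∀ j, Measurable (ε j)) (hεt : ∀ j, Measurable (εt j)) (f : ℕ → ℕ) :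
    Measurable fun ω => ∑ j ∈ range (X ω), f (ε j ω) + ∑ j ∈ range (Y ω), f (εt j ω) :=
  (measurable_sum_range hX fun j => Measurable.of_discrete.comp (hε j)).add
    (measurable_sum_range hY fun j => Measurable.of_discrete.comp (hεt j))

theorem measureReal_linearForms_eq [IsProbabilityMeasure μ] {p q : ℝ} (hp : p ≤ 1) (hq : q ≤ 1)
    {X Y : Ω → ℕ} {ε εt : ℕ → Ω → ℕ} (hX : Measurable X) (hY : Measurable Y)
    (hε : ∀ j, Measurable (ε j)) (hεt : ∀ j, Measurable (εt j)) (hXY : IdentDistrib X Y μ μ)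
    (hε01 : ∀ j ω, ε j ω ≤ 1) (hεP : ∀ j, μ {ω | ε j ω = 1} = ENNReal.ofReal (1 - p))
    (hεt01 : ∀ j ω, εt j ω ≤ 1) (hεtP : ∀ j, μ {ω | εt j ω = 1} = ENNReal.ofReal (1 - q))
    (h : iIndepFun (interleave X Y ε εt) μ) (m n : ℕ) :
    μ.real {ω | (∑ j ∈ range (X ω), ε j ω) + ∑ j ∈ range (Y ω), εt j ω = m ∧
        (∑ j ∈ range (X ω), (1 - ε j ω)) + ∑ j ∈ range (Y ω), (1 - εt j ω) = n} =
      linearFormsPMF p q (fun k => μ.real {ω | X ω = k}) m n := by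
  have hlawY : (fun k => μ.real {ω | Y ω = k}) = fun k => μ.real {ω | X ω = k} :=
    funext fun k => congrArg ENNReal.toReal (hXY.measure_mem_eq (measurableSet_singleton k)).symm
  have hεP' : ∀ j, μ.real {ω | ε j ω = 1} = 1 - p := fun j => by
    rw [measureReal_def, hεP, ENNReal.toReal_ofReal (by linarith)]
  have hεtP' : ∀ j, μ.real {ω | εt j ω = 1} = 1 - q := fun j => by
    rw [measureReal_def, hεtP, ENNReal.toReal_ofReal (by linarith)]
  have hεc : ∀ j, Measurable fun ω => 1 - ε j ω := fun j => Measurable.of_discrete.comp (hε j)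
  have hεtc : ∀ j, Measurable fun ω => 1 - εt j ω := fun j => Measurable.of_discrete.comp (hεt j)
  rw [measureReal_add_add_eq_sum (measurable_sum_range hX hε) (measurable_sum_range hX hεc)
    (measurable_sum_range hY hεt) (measurable_sum_range hY hεtc)]
  refine sum_congr rfl fun x _ => sum_congr rfl fun y _ => ?_
  rw [(indep_of_interleave hX hY hε hεt h).measureReal_inter_eq_mul
      (measurableSet_thinned X ε _ _) (measurableSet_thinned Y εt _ _),
    measureReal_thinned_eq hε (indep_of_interleave_left hX hY hε hεt h)
      (iIndepFun_of_interleave_left h) hε01 hεP',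
    measureReal_thinned_eq hεt (indep_of_interleave_right hX hY hε hεt h)
      (iIndepFun_of_interleave_right h) hεt01 hεtP', hlawY]

end LinearForms

end PoissonThinning

open PoissonThinning

/-- The linear forms `K₁ = X̃_{1-p} + Ỹ_{1-q}` and `K₂ = X̃_p + Ỹ_q` are
independent if and only if `X` is Poisson distributed. -/
theorem indep_linear_forms_iff_poisson
    {Ω : Type*} [MeasurableSpace Ω] (μ : Measure Ω) [IsProbabilityMeasure μ]
    (p q : ℝ) (hp0 : 0 < p) (hp1 : p < 1) (hq0 : 0 < q) (hq1 : q < 1)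
    (X Y : Ω → ℕ) (ε εt : ℕ → Ω → ℕ)
    (hXm : Measurable X) (hYm : Measurable Y)
    (hεm : ∀ j, Measurable (ε j)) (hεtm : ∀ j, Measurable (εt j))
    -- X and Y are identically distributed
    (hXY : IdentDistrib X Y μ μ)
    -- each ε_j is a Bernoulli random variable with parameter 1 - p
    (hε01 : ∀ j ω, ε j ω ≤ 1)
    (hεP : ∀ j, μ {ω | ε j ω = 1} = ENNReal.ofReal (1 - p))
    -- each ε̃_j is a Bernoulli random variable with parameter 1 - q
    (hεt01 : ∀ j ω, εt j ω ≤ 1)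
    (hεtP : ∀ j, μ {ω | εt j ω = 1} = ENNReal.ofReal (1 - q))
    -- X, Y, the ε_j's and the ε̃_j's are mutually independent
    (hindep : iIndepFun
      (fun i : ℕ => if i = 0 then X else if i = 1 then Y
        else if (i - 2) % 2 = 0 then ε ((i - 2) / 2) else εt ((i - 2) / 2)) μ) :
    IndepFun
      (fun ω => (∑ j ∈ Finset.range (X ω), ε j ω) +
        ∑ j ∈ Finset.range (Y ω), εt j ω)
      (fun ω => (∑ j ∈ Finset.range (X ω), (1 - ε j ω)) +
        ∑ j ∈ Finset.range (Y ω), (1 - εt j ω)) μ ↔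
    ∃ l : ℝ, 0 ≤ l ∧ ∀ k : ℕ,
      μ {ω | X ω = k} = ENNReal.ofReal (Real.exp (-l) * l ^ k / k.factorial) := by
  have hlaw := measureReal_linearForms_eq (μ := μ) hp1.le hq1.le hXm hYm hεm hεtm hXY hε01 hεP
    hεt01 hεtP hindep
  have hK₁ := measurable_sum_range_add hXm hYm hεm hεtm fun x => x
  have hK₂ := measurable_sum_range_add hXm hYm hεm hεtm fun x => 1 - x
  constructor
  · intro hK
    obtain ⟨l, hl, hb⟩ := exists_poisson_of_linearFormsPMF_eq_mul hp0 hp1 hq0 hq1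
      (fun k => measureReal_nonneg) (hasSum_measureReal_setOf_eq hXm) fun m n => by
        rw [← hlaw, measureReal_def, (indepFun_iff_measure_inter_eq_mul hK₁ hK₂).1 hK,
          ENNReal.toReal_mul]
    exact ⟨l, hl, fun k => by rw [← ofReal_measureReal, hb k]⟩
  · rintro ⟨l, hl, hX⟩
    have hb : (fun k => μ.real {ω | X ω = k}) = fun k => exp (-l) * l ^ k / k.factorial :=
      funext fun k => by rw [measureReal_def, hX, ENNReal.toReal_ofReal (by positivity)]
    have h1p := sub_pos.2 hp1
    have h1q := sub_pos.2 hq1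
    refine indepFun_of_measure_eq_mul hK₁ hK₂
      (fun m => ENNReal.ofReal (exp (-l) * ((l * (1 - p) + l * (1 - q)) ^ m / m.factorial)))
      (fun n => ENNReal.ofReal (exp (-l) * ((l * p + l * q) ^ n / n.factorial))) fun m n => ?_
    rw [← ofReal_measureReal, hlaw, hb, linearFormsPMF_poisson, ENNReal.ofReal_mul (by positivity)]
end

section
/- Suppose the probability generating function 𝒫 of the ℕ-valued random variable X satisfies, for all real u, v with 0 ≤ u ≤ 1 and 0 ≤ v ≤ 1, the functional equation 𝒫((1-p)u + pv)·𝒫((1-q)u + qv) = 𝒫((1-p)u + p)·𝒫((1-q)u + q)·𝒫((1-p) + pv)·𝒫((1-q) + qv). Then there exists λ ≥ 0 such that 𝒫(z) = exp(λ(z-1)) for all z ∈ [0,1]; equivalently, X is Poisson distributed with P(X = k) = e^{-λ} λ^k / k! for all k ∈ ℕ. -/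
/-!
Write `g = log 𝒫` on `(0, 1)`, where `𝒫 > 0`. The functional equation becomes
`g ((1-p)u + pv) + g ((1-q)u + qv) = A u + B v`, so the mixed derivative `∂ᵤ∂ᵥ` of the left side
vanishes; at `u = v = s` it equals `(p(1-p) + q(1-q)) g''(s)`. Hence `g` is affine and
`𝒫 z = exp (c + λ z)` on `(0, 1)`. Since `𝒫` is a power series of radius at least `1`, the identity
theorem extends this to `(-1, 1)` and comparing coefficients gives
`P(X = k) = e^c λ^k / k!`; total mass `1` forces `c = -λ`.
-/

open MeasureTheory Set Topology FormalMultilinearSeries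
open scoped ENNReal Nat

theorem hasFPowerSeriesOnBall_ofScalars_of_hasSum {a : ℕ → ℝ} {f : ℝ → ℝ} {r : ℝ≥0∞}
    (hr : 0 < r) (h : ∀ z : ℝ, ‖z‖ₑ < r → HasSum (fun n => a n * z ^ n) (f z)) :
    HasFPowerSeriesOnBall f (ofScalars ℝ a) 0 r where
  r_le := by
    refine ENNReal.le_of_forall_nnreal_lt fun s hs => le_radius_of_summable _ ?_
    refine (h s (by simpa using hs)).summable.abs.congr fun n => ?_
    simp [abs_mul]
  r_pos := hr
  hasSum {y} hy := by
    simpa [ofScalars_apply_eq, mul_comm] using h y (by simpa using hy)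

theorem hasSum_exp_mul_pow_div_factorial (c l z : ℝ) :
    HasSum (fun n => Real.exp c * l ^ n / n ! * z ^ n) (Real.exp (c + l * z)) := by
  have := (NormedSpace.expSeries_div_hasSum_exp (l * z)).mul_left (Real.exp c)
  rw [← Real.exp_eq_exp_ℝ, ← Real.exp_add] at this
  exact this.congr_fun fun n => by ring

section ProbabilityGeneratingFunction

variable (ν : Measure ℕ)

theorem hasSum_measureReal_singleton_mul_pow [IsFiniteMeasure ν] {t : ℝ} (ht : |t| ≤ 1) :
    HasSum (fun n => ν.real {n} * t ^ n) (∫ n, t ^ n ∂ν) := by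
  have hmass : ∑' n, ν {n} = ν univ := by
    simpa using (lintegral_countable' (μ := ν) fun _ => 1).symm
  have hsum : Summable fun n => ν.real {n} :=
    ENNReal.summable_toReal (hmass ▸ measure_ne_top ν univ)
  have := hasSum_integral_sum_dirac (c := fun n => ν {n}) (x := id) (f := fun n => t ^ n)
    (fun n => measure_ne_top ν {n}) (hsum.of_nonneg_of_le (fun n => by positivity) fun n => ?_)
  · simpa [Measure.sum_smul_dirac, measureReal_def] using this
  · simp only [norm_pow, Real.norm_eq_abs]
    exact mul_le_of_le_one_right measureReal_nonneg (pow_le_one₀ (abs_nonneg t) ht)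

theorem hasFPowerSeriesOnBall_integral_pow [IsFiniteMeasure ν] :
    HasFPowerSeriesOnBall (fun t => ∫ n, t ^ n ∂ν) (ofScalars ℝ fun n => ν.real {n}) 0 1 :=
  hasFPowerSeriesOnBall_ofScalars_of_hasSum one_pos fun z hz =>
    hasSum_measureReal_singleton_mul_pow ν <| by
      simpa using enorm_le_iff_norm_le.1 (hz.le.trans_eq (enorm_one (G := ℝ)).symm)

theorem integral_pow_pos_s14 [IsFiniteMeasure ν] [NeZero ν] {t : ℝ} (ht₀ : 0 < t) (ht₁ : t ≤ 1) :
    0 < ∫ n, t ^ n ∂ν := by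
  have hint : Integrable (fun n : ℕ => t ^ n) ν :=
    .of_bound (C := 1) .of_discrete (.of_forall fun n => by
      simpa [abs_of_pos ht₀] using pow_le_one₀ ht₀.le ht₁)
  rw [integral_pos_iff_support_of_nonneg (fun n => by positivity) hint,
    Function.support_eq_univ fun n => (pow_pos ht₀ n).ne']
  simpa using NeZero.ne ν

theorem measureReal_singleton_eq_of_eqOn_exp [IsProbabilityMeasure ν] {c l : ℝ}
    (h : EqOn (fun t => ∫ n, t ^ n ∂ν) (fun z => Real.exp (c + l * z)) (Ioo 0 1)) (n : ℕ) :
    ν.real {n} = Real.exp (-l) * l ^ n / n ! := by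
  have hpgf := hasFPowerSeriesOnBall_integral_pow ν
  have hexp : HasFPowerSeriesOnBall (fun z => Real.exp (c + l * z))
      (ofScalars ℝ fun n => Real.exp c * l ^ n / n !) 0 ⊤ :=
    hasFPowerSeriesOnBall_ofScalars_of_hasSum ENNReal.zero_lt_top fun z _ =>
      hasSum_exp_mul_pow_div_factorial c l z
  have hball : EqOn (fun t => ∫ n, t ^ n ∂ν) (fun z => Real.exp (c + l * z)) (Metric.eball 0 1) :=
    hpgf.analyticOnNhd.eqOn_of_preconnected_of_eventuallyEq
      (hexp.analyticOnNhd.mono (Metric.eball_subset_eball le_top))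
      (convex_eball 0 1).isPreconnected (z₀ := 1 / 2) (by norm_num [Metric.mem_eball, edist_dist])
      (h.eventuallyEq_of_mem (Ioo_mem_nhds (by norm_num) (by norm_num)))
  have hcoeff : (fun n => ν.real {n}) = fun n => Real.exp c * l ^ n / n ! :=
    ofScalars_series_injective ℝ ℝ ((hpgf.hasFPowerSeriesAt.congr
      (hball.eventuallyEq_of_mem (Metric.eball_mem_nhds 0 one_pos))).eq_formalMultilinearSeries
        hexp.hasFPowerSeriesAt)
  have hc : c = -l := by
    have hmass := hasSum_measureReal_singleton_mul_pow ν (t := 1) (by simp)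
    simp only [congrFun hcoeff] at hmass
    have := hmass.unique (hasSum_exp_mul_pow_div_factorial c l 1)
    simp only [one_pow, integral_const, smul_eq_mul, mul_one, probReal_univ] at this
    linarith [Real.exp_eq_one_iff _ |>.1 this.symm]
  rw [congrFun hcoeff n, hc]

end ProbabilityGeneratingFunction

theorem HasDerivAt.comp_add_mul {f : ℝ → ℝ} {f' : ℝ} (a b x : ℝ)
    (hf : HasDerivAt f f' (a + b * x)) : HasDerivAt (fun y => f (a + b * y)) (f' * b) x :=
  hf.comp x (((hasDerivAt_id x).const_mul b).const_add a |>.congr_deriv (mul_one b))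

theorem HasDerivAt.comp_mul_add {f : ℝ → ℝ} {f' : ℝ} (a b x : ℝ)
    (hf : HasDerivAt f f' (a * x + b)) : HasDerivAt (fun y => f (a * y + b)) (f' * a) x :=
  hf.comp x (((hasDerivAt_id x).const_mul a).add_const b |>.congr_deriv (mul_one a))

theorem sub_mul_add_mul_mem_Ioo {u v p : ℝ} (hu : u ∈ Ioo (0 : ℝ) 1) (hv : v ∈ Ioo (0 : ℝ) 1)
    (hp : p ∈ Icc (0 : ℝ) 1) : (1 - p) * u + p * v ∈ Ioo (0 : ℝ) 1 :=
  convex_Ioo (0 : ℝ) 1 hu hv (sub_nonneg.2 hp.2) hp.1 (sub_add_cancel 1 p)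

theorem mul_deriv_deriv_eq_zero_of_add_eq_add {g A B : ℝ → ℝ} {p q : ℝ}
    (hp : p ∈ Icc (0 : ℝ) 1) (hq : q ∈ Icc (0 : ℝ) 1)
    (hg : DifferentiableOn ℝ g (Ioo 0 1)) (hg' : DifferentiableOn ℝ (deriv g) (Ioo 0 1))
    (h : ∀ u ∈ Ioo (0 : ℝ) 1, ∀ v ∈ Ioo (0 : ℝ) 1,
      g ((1 - p) * u + p * v) + g ((1 - q) * u + q * v) = A u + B v)
    {s : ℝ} (hs : s ∈ Ioo (0 : ℝ) 1) :
    (p * (1 - p) + q * (1 - q)) * deriv (deriv g) s = 0 := by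
  have hg_at : ∀ {r u v}, r ∈ Icc (0 : ℝ) 1 → u ∈ Ioo (0 : ℝ) 1 → v ∈ Ioo (0 : ℝ) 1 →
      HasDerivAt g (deriv g ((1 - r) * u + r * v)) ((1 - r) * u + r * v) :=
    fun hr hu hv => ((hg _ (sub_mul_add_mul_mem_Ioo hu hv hr)).differentiableAt
      (isOpen_Ioo.mem_nhds (sub_mul_add_mul_mem_Ioo hu hv hr))).hasDerivAt
  have hg'_at : ∀ {r}, r ∈ Icc (0 : ℝ) 1 →
      HasDerivAt (deriv g) (deriv (deriv g) ((1 - r) * s + r * s)) ((1 - r) * s + r * s) :=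
    fun hr => ((hg' _ (sub_mul_add_mul_mem_Ioo hs hs hr)).differentiableAt
      (isOpen_Ioo.mem_nhds (sub_mul_add_mul_mem_Ioo hs hs hr))).hasDerivAt
  set D : ℝ → ℝ → ℝ := fun u v =>
    p * deriv g ((1 - p) * u + p * v) + q * deriv g ((1 - q) * u + q * v)
  have hDv : ∀ u ∈ Ioo (0 : ℝ) 1, ∀ v ∈ Ioo (0 : ℝ) 1, HasDerivAt
      (fun w => g ((1 - p) * u + p * w) + g ((1 - q) * u + q * w)) (D u v) v := fun u hu v hv =>
    (((hg_at hp hu hv).comp_add_mul _ _ v).add ((hg_at hq hu hv).comp_add_mul _ _ v)).congr_deriv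
      (by simp only [D]; ring)
  -- `A u - A s` is constant in `v`, so the `v`-derivatives at `u` and at `s` agree.
  have hD : ∀ u ∈ Ioo (0 : ℝ) 1, ∀ v ∈ Ioo (0 : ℝ) 1, D u v = D s v := by
    intro u hu v hv
    have hconst : (fun w => (g ((1 - p) * u + p * w) + g ((1 - q) * u + q * w)) -
        (g ((1 - p) * s + p * w) + g ((1 - q) * s + q * w))) =ᶠ[𝓝 v] fun _ => A u - A s := by
      filter_upwards [isOpen_Ioo.mem_nhds hv] with w hw
      simp only [h u hu w hw, h s hs w hw]
      ring
    have := ((hDv u hu v hv).sub (hDv s hs v hv)).congr_of_eventuallyEq hconst.symm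
    exact sub_eq_zero.1 (this.unique (hasDerivAt_const v _))
  have hDu : HasDerivAt (fun u => D u s)
      ((p * (1 - p) + q * (1 - q)) * deriv (deriv g) s) s := by
    refine ((((hg'_at hp).comp_mul_add _ _ s).const_mul p).add
      (((hg'_at hq).comp_mul_add _ _ s).const_mul q)).congr_deriv ?_
    rw [show (1 - p) * s + p * s = s by ring, show (1 - q) * s + q * s = s by ring]
    ring
  refine hDu.unique ((hasDerivAt_const s (D s s)).congr_of_eventuallyEq ?_)
  filter_upwards [isOpen_Ioo.mem_nhds hs] with u hu
  exact hD u hu s hs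

theorem IsOpen.exists_eqOn_add_mul_of_deriv_deriv_eq_zero {g : ℝ → ℝ} {s : Set ℝ} (hs : IsOpen s)
    (hs' : IsPreconnected s) (hg : DifferentiableOn ℝ g s)
    (hg' : DifferentiableOn ℝ (deriv g) s) (h : EqOn (deriv (deriv g)) 0 s) :
    ∃ c l : ℝ, EqOn g (fun z => c + l * z) s := by
  obtain ⟨l, hl⟩ := hs.exists_is_const_of_deriv_eq_zero hs' hg' h
  obtain ⟨c, hc⟩ := hs.exists_eq_add_of_deriv_eq hs' hg (differentiableOn_id.const_mul l)
    fun z hz => by simp [hl z hz]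
  exact ⟨c, l, fun z hz => (hc hz).trans (add_comm _ _)⟩

theorem exists_eqOn_exp_of_functional_equation {F : ℝ → ℝ} {p q : ℝ}
    (hp : p ∈ Ioo (0 : ℝ) 1) (hq : q ∈ Icc (0 : ℝ) 1)
    (hF : AnalyticOnNhd ℝ F (Ioo 0 1)) (hpos : ∀ x ∈ Ioc (0 : ℝ) 1, 0 < F x)
    (hfe : ∀ u ∈ Ioo (0 : ℝ) 1, ∀ v ∈ Ioo (0 : ℝ) 1,
      F ((1 - p) * u + p * v) * F ((1 - q) * u + q * v) =
        F ((1 - p) * u + p) * F ((1 - q) * u + q) *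
          (F ((1 - p) + p * v) * F ((1 - q) + q * v))) :
    ∃ c l : ℝ, EqOn F (fun z => Real.exp (c + l * z)) (Ioo 0 1) := by
  have hne : ∀ r ∈ Icc (0 : ℝ) 1, ∀ u ∈ Ioc (0 : ℝ) 1, ∀ v ∈ Ioc (0 : ℝ) 1,
      F ((1 - r) * u + r * v) ≠ 0 := fun r hr u hu v hv =>
    (hpos _ (convex_Ioc (0 : ℝ) 1 hu hv (sub_nonneg.2 hr.2) hr.1 (sub_add_cancel 1 r))).ne'
  have hlog : ∀ u ∈ Ioo (0 : ℝ) 1, ∀ v ∈ Ioo (0 : ℝ) 1,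
      Real.log (F ((1 - p) * u + p * v)) + Real.log (F ((1 - q) * u + q * v)) =
        (Real.log (F ((1 - p) * u + p)) + Real.log (F ((1 - q) * u + q))) +
          (Real.log (F ((1 - p) + p * v)) + Real.log (F ((1 - q) + q * v))) := by
    intro u hu v hv
    have hp' := Ioo_subset_Icc_self hp
    have hu' := Ioo_subset_Ioc_self hu
    have hv' := Ioo_subset_Ioc_self hv
    have h1 : (1 : ℝ) ∈ Ioc (0 : ℝ) 1 := right_mem_Ioc.2 one_pos
    have hpu : F ((1 - p) * u + p) ≠ 0 := by simpa using hne p hp' u hu' 1 h1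
    have hqu : F ((1 - q) * u + q) ≠ 0 := by simpa using hne q hq u hu' 1 h1
    have hpv : F ((1 - p) + p * v) ≠ 0 := by simpa using hne p hp' 1 h1 v hv'
    have hqv : F ((1 - q) + q * v) ≠ 0 := by simpa using hne q hq 1 h1 v hv'
    rw [← Real.log_mul (hne p hp' u hu' v hv') (hne q hq u hu' v hv'), hfe u hu v hv,
      Real.log_mul (mul_ne_zero hpu hqu) (mul_ne_zero hpv hqv), Real.log_mul hpu hqu,
      Real.log_mul hpv hqv]
  have hg : AnalyticOnNhd ℝ (fun x => Real.log (F x)) (Ioo 0 1) := fun x hx =>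
    (hF x hx).log (hpos x (Ioo_subset_Ioc_self hx))
  have hpq : p * (1 - p) + q * (1 - q) ≠ 0 := by
    nlinarith [hp.1, hp.2, hq.1, hq.2]
  obtain ⟨c, l, hcl⟩ := isOpen_Ioo.exists_eqOn_add_mul_of_deriv_deriv_eq_zero isPreconnected_Ioo
    hg.differentiableOn hg.deriv.differentiableOn fun s hs =>
      (mul_eq_zero.1 (mul_deriv_deriv_eq_zero_of_add_eq_add (Ioo_subset_Icc_self hp) hq
        hg.differentiableOn hg.deriv.differentiableOn hlog hs)).resolve_left hpq
  exact ⟨c, l, fun z hz =>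
    (Real.exp_log (hpos z (Ioo_subset_Ioc_self hz))).symm.trans (congrArg Real.exp (hcl hz))⟩

/-- If the probability generating function `𝒫` of the `ℕ`-valued random variable `X`
satisfies the independence functional equation
`𝒫((1-p)u + pv)·𝒫((1-q)u + qv) = 𝒫((1-p)u + p)·𝒫((1-q)u + q)·𝒫((1-p) + pv)·𝒫((1-q) + qv)`
on `[0,1] × [0,1]`, then there exists `λ ≥ 0` with `𝒫(z) = exp(λ(z-1))` on `[0,1]`;
equivalently, `X` is Poisson distributed. -/
theorem pgf_functional_equation_implies_poisson
    {Ω : Type*} [MeasurableSpace Ω] (μ : Measure Ω) [IsProbabilityMeasure μ]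
    (p q : ℝ) (hp0 : 0 < p) (hp1 : p < 1) (hq0 : 0 < q) (hq1 : q < 1)
    (X : Ω → ℕ) (hXm : Measurable X)
    (P : ℝ → ℝ) (hP : ∀ t : ℝ, P t = ∫ ω, t ^ X ω ∂μ)
    (hfe : ∀ u v : ℝ, 0 ≤ u → u ≤ 1 → 0 ≤ v → v ≤ 1 →
      P ((1 - p) * u + p * v) * P ((1 - q) * u + q * v) =
        P ((1 - p) * u + p) * P ((1 - q) * u + q) *
          (P ((1 - p) + p * v) * P ((1 - q) + q * v))) :
    ∃ l : ℝ, 0 ≤ l ∧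
      (∀ z : ℝ, 0 ≤ z → z ≤ 1 → P z = Real.exp (l * (z - 1))) ∧
      (∀ k : ℕ, μ {ω | X ω = k} =
        ENNReal.ofReal (Real.exp (-l) * l ^ k / k.factorial)) := by
  set ν := μ.map X
  have : IsProbabilityMeasure ν := Measure.isProbabilityMeasure_map hXm.aemeasurable
  obtain rfl : P = fun t => ∫ n, t ^ n ∂ν :=
    funext fun t => (hP t).trans (integral_map hXm.aemeasurable .of_discrete).symm
  have hIoo : Ioo (0 : ℝ) 1 ⊆ Metric.eball 0 1 := fun x hx => by
    simpa [Metric.mem_eball, edist_dist, abs_lt] using ⟨by linarith [hx.1], hx.2⟩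
  obtain ⟨c, l, hcl⟩ := exists_eqOn_exp_of_functional_equation ⟨hp0, hp1⟩ ⟨hq0.le, hq1.le⟩
    ((hasFPowerSeriesOnBall_integral_pow ν).analyticOnNhd.mono hIoo)
    (fun x hx => integral_pow_pos_s14 ν hx.1 hx.2)
    (fun u hu v hv => hfe u v hu.1.le hu.2.le hv.1.le hv.2.le)
  have hν := measureReal_singleton_eq_of_eqOn_exp ν hcl
  refine ⟨l, ?_, fun z hz₀ hz₁ => ?_, fun k => ?_⟩
  · have := hν 1 ▸ measureReal_nonneg (μ := ν) (s := {1})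
    simpa [mul_nonneg_iff_of_pos_left (Real.exp_pos _)] using this
  · refine (hasSum_measureReal_singleton_mul_pow ν (abs_le.2 ⟨by linarith, hz₁⟩)).unique ?_
    simpa only [hν, neg_add_eq_sub, ← mul_sub_one] using hasSum_exp_mul_pow_div_factorial (-l) l z
  · change μ (X ⁻¹' {k}) = _
    rw [← Measure.map_apply hXm (measurableSet_singleton k), ← hν k, ofReal_measureReal]
end
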